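/- arXiv:1805.01462 — 6 statements merged into one kernel-verified Lean document; each statement's English description precedes it below -/
import Mathlib

section
/- For fixed α, β > -1, the Volterra function x ↦ μ(x, β, α) is geometrically (multiplicatively) convex on (0, ∞): for all x, y > 0 and all λ ∈ [0, 1], one has μ(x^λ · y^(1-λ), β, α) ≤ μ(x, β, α)^λ · μ(y, β, α)^(1-λ). -/
/-!
The integrand is `x ^ (t + α)` times a kernel `k(t)` that is nonnegative for `t > 0`, and
`(x ^ l * y ^ (1 - l)) ^ (t + α) * k = (x ^ (t + α) * k) ^ l * (y ^ (t + α) * k) ^ (1 - l)`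
pointwise, so the claim is Hölder's inequality with exponents `1 / l` and `1 / (1 - l)`.
The only analytic input is integrability, which follows from
`Γ(s + 1) ≥ e^{-(R + 1)} R ^ s` with `R = e x`: it makes `x ^ s / Γ(s + 1)` decay like `e^{-s}`.
-/

open MeasureTheory Real Set

/-- The Volterra function `μ(x, β, α) = ∫₀^∞ x^(t+α) t^β / (Γ(t+α+1) Γ(β+1)) dt`. -/
noncomputable def volterraMu (x β α : ℝ) : ℝ :=
  ∫ t in Set.Ioi (0 : ℝ),
    x ^ (t + α) * t ^ β / (Real.Gamma (t + α + 1) * Real.Gamma (β + 1))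

section Holder

variable {ι : Type*} [MeasurableSpace ι] {μ : Measure ι}

theorem integral_rpow_mul_rpow_le {f g : ι → ℝ} (hf0 : 0 ≤ᵐ[μ] f) (hg0 : 0 ≤ᵐ[μ] g)
    (hf : Integrable f μ) (hg : Integrable g μ) {p q : ℝ} (hp : 0 ≤ p) (hq : 0 ≤ q)
    (hpq : p + q = 1) :
    ∫ a, f a ^ p * g a ^ q ∂μ ≤ (∫ a, f a ∂μ) ^ p * (∫ a, g a ∂μ) ^ q := by
  have hfg0 : 0 ≤ᵐ[μ] fun a => f a ^ p * g a ^ q := by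
    filter_upwards [hf0, hg0] with a ha hb
    exact mul_nonneg (rpow_nonneg ha p) (rpow_nonneg hb q)
  have hofReal : (fun a => ENNReal.ofReal (f a ^ p * g a ^ q)) =ᵐ[μ]
      fun a => ENNReal.ofReal (f a) ^ p * ENNReal.ofReal (g a) ^ q := by
    filter_upwards [hf0, hg0] with a ha hb
    rw [ENNReal.ofReal_mul (rpow_nonneg ha p), ENNReal.ofReal_rpow_of_nonneg ha hp,
      ENNReal.ofReal_rpow_of_nonneg hb hq]
  rw [integral_eq_lintegral_of_nonneg_ae hfg0 ((hf.1.aemeasurable.pow_const p).mul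
      (hg.1.aemeasurable.pow_const q)).aestronglyMeasurable,
    integral_eq_lintegral_of_nonneg_ae hf0 hf.1, integral_eq_lintegral_of_nonneg_ae hg0 hg.1,
    lintegral_congr_ae hofReal, ENNReal.toReal_rpow, ENNReal.toReal_rpow,
    ← ENNReal.toReal_mul]
  refine ENNReal.toReal_mono (ENNReal.mul_ne_top ?_ ?_)
    (ENNReal.lintegral_mul_norm_pow_le hf.1.aemeasurable.ennreal_ofReal
      hg.1.aemeasurable.ennreal_ofReal hp hq hpq)
  · exact ENNReal.rpow_ne_top_of_nonneg hp hf.lintegral_lt_top.ne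
  · exact ENNReal.rpow_ne_top_of_nonneg hq hg.lintegral_lt_top.ne

theorem geomMean_rpow_mul_eq {x y k : ℝ} (hx : 0 ≤ x) (hy : 0 ≤ y) (hk : 0 ≤ k) (s l : ℝ) :
    (x ^ l * y ^ (1 - l)) ^ s * k = (x ^ s * k) ^ l * (y ^ s * k) ^ (1 - l) := by
  have hk' : k ^ l * k ^ (1 - l) = k := by
    rw [← rpow_add' hk (by norm_num), add_sub_cancel, rpow_one]
  rw [mul_rpow (rpow_nonneg hx _) (rpow_nonneg hy _), mul_rpow (rpow_nonneg hx _) hk,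
    mul_rpow (rpow_nonneg hy _) hk, ← rpow_mul hx, ← rpow_mul hx, ← rpow_mul hy, ← rpow_mul hy,
    mul_comm l s, mul_comm (1 - l) s]
  linear_combination (-(x ^ (s * l) * y ^ (s * (1 - l)))) * hk'

theorem integral_geomMean_rpow_mul_le {φ k : ι → ℝ} (hk : 0 ≤ᵐ[μ] k) {x y : ℝ} (hx : 0 ≤ x)
    (hy : 0 ≤ y) (hxk : Integrable (fun t => x ^ φ t * k t) μ)
    (hyk : Integrable (fun t => y ^ φ t * k t) μ) {l : ℝ} (hl0 : 0 ≤ l) (hl1 : l ≤ 1) :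
    ∫ t, (x ^ l * y ^ (1 - l)) ^ φ t * k t ∂μ ≤
      (∫ t, x ^ φ t * k t ∂μ) ^ l * (∫ t, y ^ φ t * k t ∂μ) ^ (1 - l) := by
  have hpointwise : (fun t => (x ^ l * y ^ (1 - l)) ^ φ t * k t) =ᵐ[μ]
      fun t => (x ^ φ t * k t) ^ l * (y ^ φ t * k t) ^ (1 - l) := by
    filter_upwards [hk] with t ht using geomMean_rpow_mul_eq hx hy ht (φ t) l
  rw [integral_congr_ae hpointwise]
  refine integral_rpow_mul_rpow_le ?_ ?_ hxk hyk hl0 (by linarith) (by ring)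
  · filter_upwards [hk] with t ht using mul_nonneg (rpow_nonneg hx _) ht
  · filter_upwards [hk] with t ht using mul_nonneg (rpow_nonneg hy _) ht

end Holder

theorem Real.exp_neg_mul_rpow_le_Gamma {s R : ℝ} (hs : 1 ≤ s) (hR : 0 < R) :
    exp (-(R + 1)) * R ^ (s - 1) ≤ Gamma s := by
  have hint := GammaIntegral_convergent (zero_lt_one.trans_le hs)
  have hIoc : Ioc R (R + 1) ⊆ Ioi 0 := fun t ht => hR.trans ht.1
  calc exp (-(R + 1)) * R ^ (s - 1)
      = ∫ _ in Ioc R (R + 1), exp (-(R + 1)) * R ^ (s - 1) := by simp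
    _ ≤ ∫ t in Ioc R (R + 1), exp (-t) * t ^ (s - 1) := by
        refine setIntegral_mono_on (integrableOn_const measure_Ioc_lt_top.ne)
          (hint.mono_set hIoc) measurableSet_Ioc fun t ht => ?_
        gcongr
        · exact ht.2
        · exact ht.1.le
    _ ≤ ∫ t in Ioi 0, exp (-t) * t ^ (s - 1) := by
        refine setIntegral_mono_set hint ?_ (Filter.Eventually.of_forall hIoc)
        filter_upwards [ae_restrict_mem measurableSet_Ioi] with t ht
        exact mul_nonneg (exp_pos _).le (rpow_nonneg (le_of_lt ht) _)
    _ = Gamma s := (Gamma_eq_integral (zero_lt_one.trans_le hs)).symm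

theorem rpow_div_Gamma_add_one_le {x s : ℝ} (hx : 0 < x) (hs : 0 ≤ s) :
    x ^ s / Gamma (s + 1) ≤ exp (exp 1 * x + 1) * exp (-s) := by
  have hR : 0 < exp 1 * x := mul_pos (exp_pos 1) hx
  have hGamma := exp_neg_mul_rpow_le_Gamma (s := s + 1) (by linarith) hR
  rw [add_sub_cancel_right] at hGamma
  calc x ^ s / Gamma (s + 1) ≤ x ^ s / (exp (-(exp 1 * x + 1)) * (exp 1 * x) ^ s) :=
        div_le_div_of_nonneg_left (by positivity) (by positivity) hGamma
    _ = exp (exp 1 * x + 1) * exp (-s) := by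
        rw [mul_rpow (exp_pos 1).le hx.le, exp_one_rpow, exp_neg, exp_neg]
        field_simp

theorem continuousOn_Gamma_add_add_one {α : ℝ} (hα : -1 < α) :
    ContinuousOn (fun t => Gamma (t + α + 1)) (Ici 0) :=
  differentiableOn_Gamma_Ioi.continuousOn.comp (by fun_prop) fun t (ht : 0 ≤ t) => by
    simp only [mem_Ioi]; linarith

theorem exists_rpow_div_Gamma_le_mul_exp_neg {x α : ℝ} (hx : 0 < x) (hα : -1 < α) :
    ∃ C, ∀ t, 0 ≤ t → x ^ (t + α) / Gamma (t + α + 1) ≤ C * exp (-t) := by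
  have hcont : ContinuousOn (fun t => x ^ (t + α) / Gamma (t + α + 1)) (Icc 0 1) :=
    ((continuous_const.rpow (by fun_prop) fun _ => Or.inl hx.ne').continuousOn).div
      ((continuousOn_Gamma_add_add_one hα).mono Icc_subset_Ici_self)
      fun t ht => (Gamma_pos_of_pos (by linarith [ht.1])).ne'
  obtain ⟨M, hM⟩ := isCompact_Icc.exists_bound_of_continuousOn hcont
  refine ⟨max (M * exp 1) (exp (exp 1 * x + 1) * exp (-α)), fun t ht => ?_⟩
  rcases le_total t 1 with ht1 | ht1
  · have hM0 : 0 ≤ M := (norm_nonneg _).trans (hM 0 ⟨le_rfl, zero_le_one⟩)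
    have hexp : 1 ≤ exp 1 * exp (-t) := by rw [← exp_add]; exact one_le_exp (by linarith)
    calc x ^ (t + α) / Gamma (t + α + 1) ≤ M := (le_abs_self _).trans (hM t ⟨ht, ht1⟩)
      _ ≤ M * exp 1 * exp (-t) := by nlinarith
      _ ≤ _ := by gcongr; exact le_max_left _ _
  · calc x ^ (t + α) / Gamma (t + α + 1) ≤ exp (exp 1 * x + 1) * exp (-(t + α)) :=
          rpow_div_Gamma_add_one_le hx (by linarith)
      _ = exp (exp 1 * x + 1) * exp (-α) * exp (-t) := by rw [neg_add, exp_add (-t)]; ring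
      _ ≤ _ := by gcongr; exact le_max_right _ _

noncomputable def volterraKernel (α β t : ℝ) : ℝ :=
  t ^ β / (Gamma (t + α + 1) * Gamma (β + 1))

theorem volterraMu_eq_integral_rpow_mul_volterraKernel (x β α : ℝ) :
    volterraMu x β α = ∫ t in Ioi 0, x ^ (t + α) * volterraKernel α β t := by
  simp only [volterraMu, volterraKernel, mul_div_assoc]

theorem volterraKernel_nonneg {α β t : ℝ} (hα : -1 < α) (hβ : -1 < β) (ht : 0 ≤ t) :
    0 ≤ volterraKernel α β t :=
  div_nonneg (rpow_nonneg ht β)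
    (mul_pos (Gamma_pos_of_pos (by linarith)) (Gamma_pos_of_pos (by linarith))).le

theorem integrableOn_rpow_mul_volterraKernel {x α β : ℝ} (hx : 0 < x) (hα : -1 < α)
    (hβ : -1 < β) : IntegrableOn (fun t => x ^ (t + α) * volterraKernel α β t) (Ioi 0) := by
  obtain ⟨C, hC⟩ := exists_rpow_div_Gamma_le_mul_exp_neg hx hα
  have hdom : IntegrableOn (fun t => C / Gamma (β + 1) * (exp (-t) * t ^ β)) (Ioi 0) := by
    have h := GammaIntegral_convergent (s := β + 1) (by linarith)
    rw [add_sub_cancel_right] at h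
    exact h.const_mul _
  have hcont : ContinuousOn (fun t => x ^ (t + α) * volterraKernel α β t) (Ioi 0) := by
    refine (continuous_const.rpow (by fun_prop) fun _ => Or.inl hx.ne').continuousOn.mul
      (ContinuousOn.div ?_ (((continuousOn_Gamma_add_add_one hα).mono Ioi_subset_Ici_self).mul
        continuousOn_const) fun t ht => ?_)
    · exact fun t (ht : 0 < t) => (continuousAt_rpow_const t β (Or.inl ht.ne')).continuousWithinAt
    · exact (mul_pos (Gamma_pos_of_pos (by linarith [mem_Ioi.mp ht]))
        (Gamma_pos_of_pos (by linarith))).ne'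
  refine hdom.mono' (hcont.aestronglyMeasurable measurableSet_Ioi) ?_
  filter_upwards [ae_restrict_mem measurableSet_Ioi] with t (ht : 0 < t)
  have hGamma : 0 < Gamma (β + 1) := Gamma_pos_of_pos (by linarith)
  rw [norm_of_nonneg (mul_nonneg (rpow_nonneg hx.le _) (volterraKernel_nonneg hα hβ ht.le))]
  calc x ^ (t + α) * volterraKernel α β t
      = x ^ (t + α) / Gamma (t + α + 1) * t ^ β / Gamma (β + 1) := by
        simp only [volterraKernel]; ring
    _ ≤ C * exp (-t) * t ^ β / Gamma (β + 1) := by gcongr; exact hC t ht.le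
    _ = C / Gamma (β + 1) * (exp (-t) * t ^ β) := by ring

/-- Geometric (multiplicative) convexity of `x ↦ μ(x, β, α)` on `(0, ∞)`. -/
theorem volterraMu_geometrically_convex (α β : ℝ) (hα : -1 < α) (hβ : -1 < β) :
    ∀ x y : ℝ, 0 < x → 0 < y → ∀ l : ℝ, l ∈ Set.Icc (0 : ℝ) 1 →
      volterraMu (x ^ l * y ^ (1 - l)) β α ≤
        volterraMu x β α ^ l * volterraMu y β α ^ (1 - l) := by
  intro x y hx hy l hl
  simp only [volterraMu_eq_integral_rpow_mul_volterraKernel]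
  have hkernel : 0 ≤ᵐ[volume.restrict (Ioi 0)] volterraKernel α β := by
    filter_upwards [ae_restrict_mem measurableSet_Ioi] with t (ht : 0 < t)
    exact volterraKernel_nonneg hα hβ ht.le
  exact integral_geomMean_rpow_mul_le hkernel hx.le hy.le
    (integrableOn_rpow_mul_volterraKernel hx hα hβ) (integrableOn_rpow_mul_volterraKernel hy hα hβ)
    hl.1 hl.2
end

section
/- For fixed β > -1 and α ≥ 0, the function x ↦ μ(x⁻¹, β, α) is completely monotonic on (0, ∞), i.e. it is infinitely differentiable and (-1)^n (d^n/dx^n) μ(x⁻¹, β, α) ≥ 0 for every integer n ≥ 0 and every x > 0; in particular x ↦ μ(x⁻¹, β, α) is log-convex on (0, ∞). -/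
open MeasureTheory Real Set
open scoped Nat

namespace VolterraAux

noncomputable def cc (α β : ℝ) (t : ℝ) : ℝ :=
  t ^ β / (Real.Gamma (t + α + 1) * Real.Gamma (β + 1))

noncomputable def gg (α β : ℝ) (n : ℕ) (x t : ℝ) : ℝ :=
  (∏ i ∈ Finset.range n, (t + α + (i : ℝ))) * (x ^ (-(t + α) - (n : ℝ)) * cc α β t)

noncomputable def HH (α β : ℝ) (n : ℕ) (x : ℝ) : ℝ := ∫ t in Ioi (0:ℝ), gg α β n x t

variable {α β x : ℝ} {n : ℕ}

lemma Gamma_shift_pos (hα : 0 ≤ α) {t : ℝ} (ht : 0 ≤ t) : 0 < Real.Gamma (t + α + 1) :=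
  Real.Gamma_pos_of_pos (by linarith)

lemma cc_pos (hβ : -1 < β) (hα : 0 ≤ α) {t : ℝ} (ht : 0 < t) : 0 < cc α β t :=
  div_pos (rpow_pos_of_pos ht _)
    (mul_pos (Gamma_shift_pos hα ht.le) (Real.Gamma_pos_of_pos (by linarith)))

lemma gg_pos (hβ : -1 < β) (hα : 0 ≤ α) (hx : 0 < x) {t : ℝ} (ht : 0 < t) :
    0 < gg α β n x t := by
  refine mul_pos (Finset.prod_pos fun i _ => ?_) (mul_pos (rpow_pos_of_pos hx _) (cc_pos hβ hα ht))
  have : (0:ℝ) ≤ i := Nat.cast_nonneg i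
  linarith

lemma gg_nonneg (hβ : -1 < β) (hα : 0 ≤ α) (hx : 0 < x) {t : ℝ} (ht : t ∈ Ioi (0:ℝ)) :
    0 ≤ gg α β n x t := (gg_pos hβ hα hx ht).le

/-- the part of `gg` without `t ^ β`. -/
noncomputable def ph (α : ℝ) (n : ℕ) (x t : ℝ) : ℝ :=
  (∏ i ∈ Finset.range n, (t + α + (i : ℝ))) * x ^ (-(t + α) - (n : ℝ)) / Real.Gamma (t + α + 1)

lemma gg_eq_ph (hα : 0 ≤ α) (hβ : -1 < β) {t : ℝ} (ht : 0 ≤ t) :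
    gg α β n x t = ph α n x t * t ^ β / Real.Gamma (β + 1) := by
  have h1 : Real.Gamma (t + α + 1) ≠ 0 := (Gamma_shift_pos hα ht).ne'
  have h2 : Real.Gamma (β + 1) ≠ 0 := (Real.Gamma_pos_of_pos (by linarith)).ne'
  unfold gg ph cc
  field_simp

lemma contOn_Gamma_shift (hα : 0 ≤ α) :
    ContinuousOn (fun t : ℝ => Real.Gamma (t + α + 1)) (Ici 0) := by
  intro t ht
  have : ∀ m : ℕ, t + α + 1 ≠ -m := by
    intro m
    have : (0:ℝ) ≤ m := Nat.cast_nonneg m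
    have ht' : (0:ℝ) ≤ t := ht
    intro h; linarith [h]
  have hc : ContinuousAt (fun t : ℝ => t + α + 1) t := by fun_prop
  have h2 := ContinuousAt.comp (g := Real.Gamma) (f := fun t : ℝ => t + α + 1)
    (Real.differentiableAt_Gamma this).continuousAt hc
  exact h2.continuousWithinAt

lemma contOn_ph (hα : 0 ≤ α) (hx : 0 < x) : ContinuousOn (ph α n x) (Ici 0) := by
  have h1 : Continuous fun t : ℝ => (∏ i ∈ Finset.range n, (t + α + (i : ℝ))) := by
    apply continuous_finset_prod
    intro i _
    fun_prop
  have h2 : Continuous fun t : ℝ => x ^ (-(t + α) - (n : ℝ)) := by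
    have : (fun t : ℝ => x ^ (-(t + α) - (n : ℝ)))
        = fun t : ℝ => Real.exp (Real.log x * (-(t + α) - (n : ℝ))) := by
      funext t; rw [Real.rpow_def_of_pos hx]
    rw [this]; fun_prop
  exact ((h1.mul h2).continuousOn.div (contOn_Gamma_shift hα)
    fun t ht => (Gamma_shift_pos hα ht).ne')

lemma contOn_gg (hα : 0 ≤ α) (hβ : -1 < β) (hx : 0 < x) :
    ContinuousOn (gg α β n x) (Ioi 0) := by
  have : ContinuousOn (fun t : ℝ => ph α n x t * t ^ β / Real.Gamma (β + 1)) (Ioi 0) := by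
    apply ContinuousOn.div_const
    apply ContinuousOn.mul ((contOn_ph hα hx).mono (Ioi_subset_Ici le_rfl))
    intro t ht
    exact (Real.continuousAt_rpow_const t β (Or.inl (ne_of_gt ht))).continuousWithinAt
  exact this.congr fun t ht => gg_eq_ph hα ‹_› (le_of_lt ht)


lemma aux_nat {r G : ℝ} (hr : 0 ≤ r) (hG : 0 ≤ G) :
    ∃ C : ℝ, 0 ≤ C ∧ ∀ m : ℕ, 1 ≤ m → (m : ℝ) ^ r * G ^ m ≤ C * (m ! : ℝ) := by
  set p : ℕ := ⌈r⌉₊ with hp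
  set G' : ℝ := (2:ℝ) ^ p * G with hG'def
  have hG' : 0 ≤ G' := by positivity
  have hsum : Summable (fun k : ℕ => G' ^ k / (k ! : ℝ)) := Real.summable_pow_div_factorial G'
  refine ⟨∑' k, G' ^ k / (k ! : ℝ), tsum_nonneg (fun k => by positivity), fun m hm => ?_⟩
  have hm1 : (1:ℝ) ≤ (m:ℝ) := by exact_mod_cast hm
  have h1 : (m:ℝ) ^ r ≤ (m:ℝ) ^ (p:ℕ) := by
    have h := Real.rpow_le_rpow_of_exponent_le hm1 (Nat.le_ceil r)
    rw [Real.rpow_natCast] at h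
    exact h
  have h2 : (m:ℝ) ^ (p:ℕ) * G ^ m ≤ G' ^ m := by
    have hm2 : (m:ℝ) ≤ 2 ^ m := by exact_mod_cast (Nat.lt_two_pow_self (n := m)).le
    calc (m:ℝ) ^ p * G ^ m ≤ ((2:ℝ) ^ m) ^ p * G ^ m := by
          gcongr
      _ = ((2:ℝ) ^ p) ^ m * G ^ m := by rw [← pow_mul, ← pow_mul, Nat.mul_comm]
      _ = G' ^ m := by rw [← mul_pow]
  have h3 : G' ^ m / (m ! : ℝ) ≤ ∑' k, G' ^ k / (k ! : ℝ) :=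
    hsum.le_tsum m (fun k _ => by positivity)
  have hfact : (0:ℝ) < (m ! : ℝ) := by exact_mod_cast m.factorial_pos
  have h4 : G' ^ m ≤ (∑' k, G' ^ k / (k ! : ℝ)) * (m ! : ℝ) := by
    rw [div_le_iff₀ hfact] at h3
    exact h3
  calc (m:ℝ) ^ r * G ^ m ≤ (m:ℝ) ^ (p:ℕ) * G ^ m :=
        mul_le_mul_of_nonneg_right h1 (pow_nonneg hG m)
    _ ≤ G' ^ m := h2
    _ ≤ (∑' k, G' ^ k / (k ! : ℝ)) * (m ! : ℝ) := h4

lemma aux_tail (hα : 0 ≤ α) {r B : ℝ} (hr : 0 ≤ r) (hB : 0 ≤ B) :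
    ∃ C : ℝ, 0 ≤ C ∧ ∀ t : ℝ, 1 ≤ t →
      t ^ r * B ^ t * Real.exp t ≤ C * Real.Gamma (t + α + 1) := by
  set D : ℝ := max (B * Real.exp 1) 1 with hDdef
  have hD1 : (1:ℝ) ≤ D := le_max_right _ _
  have hD0 : (0:ℝ) ≤ D := by linarith
  obtain ⟨C₀, hC₀, h₀⟩ := aux_nat hr hD0
  refine ⟨2 ^ r * D * C₀, by positivity, fun t ht => ?_⟩
  set m : ℕ := ⌊t⌋₊ with hm
  have hm1 : 1 ≤ m := Nat.le_floor (by exact_mod_cast ht)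
  have hmt : (m:ℝ) ≤ t := Nat.floor_le (by linarith)
  have htm : t < (m:ℝ) + 1 := Nat.lt_floor_add_one t
  have hm1' : (1:ℝ) ≤ (m:ℝ) := by exact_mod_cast hm1
  have h1 : t ^ r ≤ 2 ^ r * (m:ℝ) ^ r := by
    have h : t ≤ 2 * (m:ℝ) := by linarith
    calc t ^ r ≤ (2 * (m:ℝ)) ^ r := Real.rpow_le_rpow (by linarith) h hr
      _ = 2 ^ r * (m:ℝ) ^ r := Real.mul_rpow (by norm_num) (by linarith)
  have h2 : B ^ t * Real.exp t ≤ D * D ^ m := by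
    have e1 : B ^ t * Real.exp t = (B * Real.exp 1) ^ t := by
      rw [Real.mul_rpow hB (Real.exp_pos 1).le, Real.exp_one_rpow]
    have e2 : (B * Real.exp 1) ^ t ≤ D ^ t :=
      Real.rpow_le_rpow (by positivity) (le_max_left _ _) (by linarith)
    have e3 : D ^ t ≤ D ^ ((m:ℝ) + 1) := Real.rpow_le_rpow_of_exponent_le hD1 (by linarith)
    have e4 : D ^ ((m:ℝ) + 1) = D * D ^ m := by
      rw [show ((m:ℝ) + 1) = ((m + 1 : ℕ) : ℝ) by push_cast; ring, Real.rpow_natCast, pow_succ]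
      ring
    rw [e1]
    calc (B * Real.exp 1) ^ t ≤ D ^ t := e2
      _ ≤ D ^ ((m:ℝ) + 1) := e3
      _ = D * D ^ m := e4
  have h3 : (m ! : ℝ) ≤ Real.Gamma (t + α + 1) := by
    rw [← Real.Gamma_nat_eq_factorial]
    apply Real.Gamma_strictMonoOn_Ici.monotoneOn
    · exact mem_Ici.2 (by push_cast; linarith)
    · exact mem_Ici.2 (by linarith)
    · push_cast; linarith
  have h4 := h₀ m hm1
  have htr : (0:ℝ) ≤ t ^ r := Real.rpow_nonneg (by linarith) r
  have hBt : (0:ℝ) ≤ B ^ t := Real.rpow_nonneg hB t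
  have hmr : (0:ℝ) ≤ (m:ℝ) ^ r := Real.rpow_nonneg (by linarith) r
  calc t ^ r * B ^ t * Real.exp t = t ^ r * (B ^ t * Real.exp t) := by ring
    _ ≤ (2 ^ r * (m:ℝ) ^ r) * (D * D ^ m) := by
        apply mul_le_mul h1 h2 (by positivity) (by positivity)
    _ = 2 ^ r * D * ((m:ℝ) ^ r * D ^ m) := by ring
    _ ≤ 2 ^ r * D * (C₀ * (m ! : ℝ)) := by
        apply mul_le_mul_of_nonneg_left h4 (by positivity)
    _ = (2 ^ r * D * C₀) * (m ! : ℝ) := by ring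
    _ ≤ (2 ^ r * D * C₀) * Real.Gamma (t + α + 1) := by
        apply mul_le_mul_of_nonneg_left h3 (by positivity)


lemma gg_integrableOn (hβ : -1 < β) (hα : 0 ≤ α) (hx : 0 < x) :
    IntegrableOn (gg α β n x) (Ioi (0:ℝ)) := by
  have hΓβ : 0 < Real.Gamma (β + 1) := Real.Gamma_pos_of_pos (by linarith)
  rw [show Ioi (0:ℝ) = Ioc 0 1 ∪ Ioi 1 from (Ioc_union_Ioi_eq_Ioi zero_le_one).symm]
  apply IntegrableOn.union
  · -- on Ioc 0 1
    obtain ⟨C, hC⟩ := (isCompact_Icc (a := (0:ℝ)) (b := 1)).exists_bound_of_continuousOn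
      ((contOn_ph (n := n) hα hx).mono Icc_subset_Ici_self)
    have hC0 : 0 ≤ C := le_trans (norm_nonneg _) (hC 0 (by norm_num))
    have hint : IntegrableOn (fun t : ℝ => C / Real.Gamma (β + 1) * t ^ β) (Ioc (0:ℝ) 1) := by
      apply Integrable.const_mul
      have h := intervalIntegral.intervalIntegrable_rpow' (a := (0:ℝ)) (b := 1) hβ
      rwa [intervalIntegrable_iff_integrableOn_Ioc_of_le zero_le_one] at h
    apply hint.mono'
    · exact ((contOn_gg hα hβ hx).mono Ioc_subset_Ioi_self).aestronglyMeasurable measurableSet_Ioc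
    · rw [ae_restrict_iff' measurableSet_Ioc]
      refine ae_of_all _ fun t ht => ?_
      have ht0 : 0 < t := ht.1
      rw [gg_eq_ph hα hβ ht0.le, Real.norm_eq_abs, abs_div, abs_mul,
        abs_of_pos (rpow_pos_of_pos ht0 β), abs_of_pos hΓβ, div_le_iff₀ hΓβ]
      have hph : |ph α n x t| ≤ C := hC t ⟨ht0.le, ht.2⟩
      calc |ph α n x t| * t ^ β ≤ C * t ^ β :=
            mul_le_mul_of_nonneg_right hph (rpow_pos_of_pos ht0 β).le
        _ = C / Real.Gamma (β + 1) * t ^ β * Real.Gamma (β + 1) := by field_simp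
  · -- on Ioi 1
    set q : ℝ := max β 0 with hq
    set r : ℝ := (n : ℝ) + q with hr
    obtain ⟨C, hC0, hC⟩ := aux_tail (α := α) hα (r := r)
      (by positivity) (B := x⁻¹) (inv_nonneg.2 hx.le)
    set K : ℝ := (1 + α + (n:ℝ)) ^ n * x ^ (-α - (n:ℝ)) / Real.Gamma (β + 1) with hK
    have hK0 : 0 ≤ K := by
      apply div_nonneg _ hΓβ.le
      have : (0:ℝ) ≤ (1 + α + (n:ℝ)) := by positivity
      positivity
    have hint : IntegrableOn (fun t : ℝ => K * C * Real.exp (-t)) (Ioi (1:ℝ)) := by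
      have h := exp_neg_integrableOn_Ioi (1:ℝ) (b := 1) one_pos
      simp only [neg_one_mul] at h
      exact h.const_mul _
    apply hint.mono'
    · exact ((contOn_gg hα hβ hx).mono (Ioi_subset_Ioi zero_le_one)).aestronglyMeasurable
        measurableSet_Ioi
    · rw [ae_restrict_iff' measurableSet_Ioi]
      refine ae_of_all _ fun t ht => ?_
      have ht1 : (1:ℝ) ≤ t := le_of_lt ht
      have ht0 : (0:ℝ) < t := lt_of_lt_of_le zero_lt_one ht1
      have hΓ1 : 0 < Real.Gamma (t + α + 1) := Gamma_shift_pos hα ht0.le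
      rw [Real.norm_eq_abs, abs_of_nonneg (gg_nonneg hβ hα hx ht0)]
      -- rewrite gg in factored form
      have hinv : (x⁻¹) ^ t = x ^ (-t) := by
        rw [← Real.rpow_neg_one x, ← Real.rpow_mul hx.le]
        norm_num
      have hxe : x ^ (-(t + α) - (n:ℝ)) = x ^ (-α - (n:ℝ)) * (x⁻¹) ^ t := by
        rw [hinv, ← Real.rpow_add hx]
        congr 1; ring
      have hrw : gg α β n x t = (∏ i ∈ Finset.range n, (t + α + (i:ℝ))) * x ^ (-α - (n:ℝ))
          * ((x⁻¹) ^ t) * t ^ β / (Real.Gamma (t + α + 1) * Real.Gamma (β + 1)) := by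
        unfold gg cc
        rw [hxe]; ring
      -- bound the product
      have hP : (∏ i ∈ Finset.range n, (t + α + (i:ℝ))) ≤ (1 + α + (n:ℝ)) ^ n * t ^ (n:ℕ) := by
        have h1 : (∏ i ∈ Finset.range n, (t + α + (i:ℝ)))
            ≤ ∏ _i ∈ Finset.range n, ((1 + α + (n:ℝ)) * t) := by
          apply Finset.prod_le_prod
          · intro i _
            have : (0:ℝ) ≤ (i:ℝ) := Nat.cast_nonneg i
            linarith
          · intro i hi
            have hi' : (i:ℝ) ≤ (n:ℝ) := by
              exact_mod_cast (Finset.mem_range.1 hi).le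
            nlinarith
        rw [Finset.prod_const, Finset.card_range, mul_pow] at h1
        exact h1
      have htβ : t ^ β ≤ t ^ q := Real.rpow_le_rpow_of_exponent_le ht1 (le_max_left _ _)
      have hmerge : t ^ (n:ℕ) * t ^ q = t ^ r := by
        rw [← Real.rpow_natCast t n, ← Real.rpow_add ht0]
      have hstep : t ^ r * (x⁻¹) ^ t ≤ C * Real.exp (-t) * Real.Gamma (t + α + 1) := by
        have h := mul_le_mul_of_nonneg_right (hC t ht1) (Real.exp_pos (-t)).le
        calc t ^ r * (x⁻¹) ^ t
            = t ^ r * (x⁻¹) ^ t * Real.exp t * Real.exp (-t) := by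
              rw [mul_assoc, ← Real.exp_add]; simp
          _ ≤ C * Real.Gamma (t + α + 1) * Real.exp (-t) := h
          _ = C * Real.exp (-t) * Real.Gamma (t + α + 1) := by ring
      have hxinv : (0:ℝ) ≤ (x⁻¹) ^ t := Real.rpow_nonneg (inv_nonneg.2 hx.le) t
      have hxa : (0:ℝ) ≤ x ^ (-α - (n:ℝ)) := (Real.rpow_pos_of_pos hx _).le
      have h1an : (0:ℝ) ≤ (1 + α + (n:ℝ)) ^ n := by positivity
      rw [hrw]
      calc (∏ i ∈ Finset.range n, (t + α + (i:ℝ))) * x ^ (-α - (n:ℝ)) * ((x⁻¹) ^ t) * t ^ β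
            / (Real.Gamma (t + α + 1) * Real.Gamma (β + 1))
          ≤ ((1 + α + (n:ℝ)) ^ n * t ^ (n:ℕ)) * x ^ (-α - (n:ℝ)) * ((x⁻¹) ^ t) * t ^ q
            / (Real.Gamma (t + α + 1) * Real.Gamma (β + 1)) := by
            gcongr
          _ = (1 + α + (n:ℝ)) ^ n * x ^ (-α - (n:ℝ)) * (t ^ r * (x⁻¹) ^ t)
            / (Real.Gamma (t + α + 1) * Real.Gamma (β + 1)) := by
            rw [← hmerge]; ring
          _ ≤ (1 + α + (n:ℝ)) ^ n * x ^ (-α - (n:ℝ)) * (C * Real.exp (-t) * Real.Gamma (t + α + 1))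
            / (Real.Gamma (t + α + 1) * Real.Gamma (β + 1)) := by
            gcongr
          _ = K * C * Real.exp (-t) := by
            rw [hK]; field_simp
lemma hasDerivAt_HH (hβ : -1 < β) (hα : 0 ≤ α) (hx : 0 < x) :
    HasDerivAt (HH α β n) (-(HH α β (n + 1) x)) x := by
  have hx2 : 0 < x / 2 := half_pos hx
  have key := hasDerivAt_integral_of_dominated_loc_of_deriv_le
    (μ := volume.restrict (Ioi (0:ℝ)))
    (F := fun y t => gg α β n y t) (F' := fun y t => -(gg α β (n + 1) y t)) (x₀ := x)
    (bound := gg α β (n + 1) (x / 2)) (s := Metric.ball x (x / 2)) (Metric.ball_mem_nhds x hx2)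
    ?_ (gg_integrableOn hβ hα hx) ?_ ?_ (gg_integrableOn hβ hα hx2) ?_
  · have h2 := key.2
    rw [integral_neg] at h2
    exact h2
  · filter_upwards [eventually_gt_nhds (show x / 2 < x by linarith)] with y hy
    exact ((contOn_gg hα hβ (lt_trans hx2 hy)).aestronglyMeasurable measurableSet_Ioi)
  · exact ((contOn_gg hα hβ hx).aestronglyMeasurable measurableSet_Ioi).neg
  · rw [ae_restrict_iff' measurableSet_Ioi]
    refine ae_of_all _ fun t ht y hy => ?_
    have ht0 : 0 < t := ht
    have hy2 : x / 2 ≤ y := by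
      have := abs_lt.1 (mem_ball_iff_norm.1 hy)
      linarith [this.1]
    have hy0 : 0 < y := lt_of_lt_of_le hx2 hy2
    rw [norm_neg, Real.norm_eq_abs, abs_of_nonneg (gg_nonneg hβ hα hy0 ht)]
    unfold gg
    have he : -(t + α) - ((n + 1 : ℕ):ℝ) ≤ 0 := by
      have : (0:ℝ) ≤ ((n + 1 : ℕ):ℝ) := Nat.cast_nonneg _
      linarith
    have h1 : y ^ (-(t + α) - ((n + 1 : ℕ):ℝ)) ≤ (x / 2) ^ (-(t + α) - ((n + 1 : ℕ):ℝ)) :=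
      Real.rpow_le_rpow_of_nonpos hx2 hy2 he
    have hP : (0:ℝ) ≤ ∏ i ∈ Finset.range (n + 1), (t + α + (i:ℝ)) :=
      Finset.prod_nonneg fun i _ => by
        have : (0:ℝ) ≤ (i:ℝ) := Nat.cast_nonneg i
        linarith
    have hcc : 0 ≤ cc α β t := (cc_pos hβ hα ht0).le
    exact mul_le_mul_of_nonneg_left (mul_le_mul_of_nonneg_right h1 hcc) hP
  · rw [ae_restrict_iff' measurableSet_Ioi]
    refine ae_of_all _ fun t ht y hy => ?_
    have ht0 : 0 < t := ht
    have hy2 : x / 2 ≤ y := by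
      have := abs_lt.1 (mem_ball_iff_norm.1 hy)
      linarith [this.1]
    have hy0 : 0 < y := lt_of_lt_of_le hx2 hy2
    have hD : HasDerivAt (fun y : ℝ => gg α β n y t)
        ((∏ i ∈ Finset.range n, (t + α + (i:ℝ)))
          * ((-(t + α) - (n:ℝ)) * y ^ ((-(t + α) - (n:ℝ)) - 1) * cc α β t)) y := by
      unfold gg
      exact ((Real.hasDerivAt_rpow_const (p := -(t + α) - (n:ℝ))
        (Or.inl hy0.ne')).mul_const (cc α β t)).const_mul _
    refine hD.congr_deriv ?_
    unfold gg
    simp only [Finset.prod_range_succ, Nat.cast_add, Nat.cast_one]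
    rw [show -(t + α) - ((n:ℝ) + 1) = (-(t + α) - (n:ℝ)) - 1 by ring]
    ring

lemma HH_nonneg (hβ : -1 < β) (hα : 0 ≤ α) (hx : 0 < x) : 0 ≤ HH α β n x :=
  setIntegral_nonneg measurableSet_Ioi fun _ ht => gg_nonneg hβ hα hx ht

lemma HH_pos (hβ : -1 < β) (hα : 0 ≤ α) (hx : 0 < x) : 0 < HH α β 0 x := by
  rw [HH, setIntegral_pos_iff_support_of_nonneg_ae]
  · have hs : Function.support (gg α β 0 x) ∩ Ioi 0 = Ioi (0:ℝ) :=
      inter_eq_right.2 fun t ht => (gg_pos hβ hα hx ht).ne'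
    rw [hs]
    simp [Real.volume_Ioi]
  · exact (ae_restrict_iff' measurableSet_Ioi).2
      (ae_of_all _ fun t ht => gg_nonneg hβ hα hx ht)
  · exact gg_integrableOn hβ hα hx

/-! ### Complex extension, for analyticity -/

noncomputable def Fc (α β : ℝ) (z : ℂ) : ℂ :=
  ∫ t in Ioi (0:ℝ), z ^ (((-(t + α) : ℝ)) : ℂ) * ((cc α β t : ℝ) : ℂ)

lemma contOn_cc (hα : 0 ≤ α) (hβ : -1 < β) : ContinuousOn (cc α β) (Ioi 0) := by
  unfold cc
  apply ContinuousOn.div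
  · intro t ht
    exact (Real.continuousAt_rpow_const t β (Or.inl (ne_of_gt ht))).continuousWithinAt
  · exact (((contOn_Gamma_shift hα).mono (Ioi_subset_Ici le_rfl)).mul continuousOn_const)
  · intro t ht
    exact (mul_pos (Gamma_shift_pos hα (le_of_lt ht))
      (Real.Gamma_pos_of_pos (by linarith))).ne'

lemma contOn_Fc_integrand (hα : 0 ≤ α) (hβ : -1 < β) {z : ℂ} (hz : z ≠ 0) :
    ContinuousOn (fun t : ℝ => z ^ (((-(t + α) : ℝ)) : ℂ) * ((cc α β t : ℝ) : ℂ)) (Ioi 0) := by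
  apply ContinuousOn.mul
  · apply Continuous.continuousOn
    apply Continuous.const_cpow _ (Or.inl hz)
    exact Complex.continuous_ofReal.comp (by fun_prop)
  · exact Complex.continuous_ofReal.comp_continuousOn (contOn_cc hα hβ)

lemma norm_cpow_real {z : ℂ} (hz : z ≠ 0) (w : ℝ) :
    ‖z ^ ((w : ℝ) : ℂ)‖ = ‖z‖ ^ w := by
  rw [Complex.norm_cpow_of_ne_zero hz]
  simp

lemma Fc_integrand_integrableOn (hβ : -1 < β) (hα : 0 ≤ α) {z : ℂ} (hz : z ≠ 0) :
    IntegrableOn (fun t : ℝ => z ^ (((-(t + α) : ℝ)) : ℂ) * ((cc α β t : ℝ) : ℂ)) (Ioi 0) := by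
  have habs : 0 < ‖z‖ := norm_pos_iff.mpr hz
  apply Integrable.mono' (gg_integrableOn (n := 0) hβ hα habs)
  · exact (contOn_Fc_integrand hα hβ hz).aestronglyMeasurable measurableSet_Ioi
  · rw [ae_restrict_iff' measurableSet_Ioi]
    refine ae_of_all _ fun t ht => ?_
    have ht0 : (0:ℝ) < t := ht
    rw [norm_mul, norm_cpow_real hz, Complex.norm_real, Real.norm_eq_abs,
      abs_of_nonneg (cc_pos hβ hα ht0).le]
    have : gg α β 0 ‖z‖ t = ‖z‖ ^ (-(t + α)) * cc α β t := by
      simp [gg]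
    rw [this]

lemma differentiableAt_Fc (hβ : -1 < β) (hα : 0 ≤ α) {z₀ : ℂ} (hz : 0 < z₀.re) :
    DifferentiableAt ℂ (Fc α β) z₀ := by
  have ha : 0 < z₀.re / 2 := half_pos hz
  have key := hasDerivAt_integral_of_dominated_loc_of_deriv_le
    (μ := volume.restrict (Ioi (0:ℝ)))
    (F := fun z t => z ^ (((-(t + α) : ℝ)) : ℂ) * ((cc α β t : ℝ) : ℂ))
    (F' := fun z t => ((((-(t + α) : ℝ)) : ℂ) * z ^ ((((-(t + α) : ℝ)) : ℂ) - 1))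
      * ((cc α β t : ℝ) : ℂ))
    (x₀ := z₀) (bound := gg α β 1 (z₀.re / 2)) (s := Metric.ball z₀ (z₀.re / 2)) (Metric.ball_mem_nhds z₀ ha) ?_ ?_ ?_ ?_
    (gg_integrableOn hβ hα ha) ?_
  · exact key.2.differentiableAt
  · -- measurability eventually
    have hopen : ∀ᶠ y in nhds z₀, 0 < y.re :=
      (isOpen_lt continuous_const Complex.continuous_re).eventually_mem hz
    filter_upwards [hopen] with y hy
    have hy0 : y ≠ 0 := fun h => by simp [h] at hy
    exact (contOn_Fc_integrand hα hβ hy0).aestronglyMeasurable measurableSet_Ioi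
  · exact Fc_integrand_integrableOn hβ hα (fun h => by simp [h] at hz)
  · -- measurability of F' at z₀
    have hz0 : z₀ ≠ 0 := fun h => by simp [h] at hz
    apply ContinuousOn.aestronglyMeasurable _ measurableSet_Ioi
    apply ContinuousOn.mul _ (Complex.continuous_ofReal.comp_continuousOn (contOn_cc hα hβ))
    apply ContinuousOn.mul (Complex.continuous_ofReal.comp (by fun_prop)).continuousOn
    apply Continuous.continuousOn
    apply Continuous.const_cpow _ (Or.inl hz0)
    have : Continuous fun t : ℝ => ((-(t + α) : ℝ) : ℂ) :=
      Complex.continuous_ofReal.comp (by fun_prop)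
    fun_prop
  · -- the bound
    rw [ae_restrict_iff' measurableSet_Ioi]
    refine ae_of_all _ fun t ht y hy => ?_
    have ht0 : (0:ℝ) < t := ht
    have hrey : z₀.re / 2 < y.re := by
      have h1 : |(y - z₀).re| ≤ ‖y - z₀‖ := Complex.abs_re_le_norm _
      have h2 : ‖y - z₀‖ < z₀.re / 2 := mem_ball_iff_norm.1 hy
      have h3 : |y.re - z₀.re| ≤ ‖y - z₀‖ := by rwa [Complex.sub_re] at h1
      have := abs_lt.1 (lt_of_le_of_lt h3 h2)
      linarith [this.1]
    have hy0 : y ≠ 0 := fun h => by rw [h] at hrey; simp at hrey; linarith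
    have haby : z₀.re / 2 ≤ ‖y‖ :=
      le_trans (le_of_lt hrey) (Complex.re_le_norm y)
    have he1 : ((((-(t + α) : ℝ)) : ℂ) - 1) = (((-(t + α) - 1 : ℝ)) : ℂ) := by push_cast; ring
    have he2 : ‖(((-(t + α) : ℝ)) : ℂ)‖ = t + α := by
      rw [Complex.norm_real, Real.norm_eq_abs, abs_of_nonpos (by linarith)]
      ring
    have he3 : ‖((cc α β t : ℝ) : ℂ)‖ = cc α β t := by
      rw [Complex.norm_real, Real.norm_eq_abs, abs_of_nonneg (cc_pos hβ hα ht0).le]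
    rw [norm_mul, norm_mul, he1, norm_cpow_real hy0, he2, he3]
    have hgg : gg α β 1 (z₀.re / 2) t
        = (t + α) * ((z₀.re / 2) ^ (-(t + α) - 1) * cc α β t) := by
      simp [gg, Finset.prod_range_one]
    rw [hgg]
    have hb : ‖y‖ ^ (-(t + α) - 1) ≤ (z₀.re / 2) ^ (-(t + α) - 1) :=
      Real.rpow_le_rpow_of_nonpos ha haby (by linarith)
    have h4 : 0 ≤ t + α := by linarith
    calc (t + α) * ‖y‖ ^ (-(t + α) - 1) * cc α β t
        ≤ (t + α) * (z₀.re / 2) ^ (-(t + α) - 1) * cc α β t := by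
          apply mul_le_mul_of_nonneg_right _ (cc_pos hβ hα ht0).le
          exact mul_le_mul_of_nonneg_left hb h4
      _ = (t + α) * ((z₀.re / 2) ^ (-(t + α) - 1) * cc α β t) := by ring
  · -- differentiability in z
    rw [ae_restrict_iff' measurableSet_Ioi]
    refine ae_of_all _ fun t ht y hy => ?_
    have hrey : z₀.re / 2 < y.re := by
      have h1 : |(y - z₀).re| ≤ ‖y - z₀‖ := Complex.abs_re_le_norm _
      have h2 : ‖y - z₀‖ < z₀.re / 2 := mem_ball_iff_norm.1 hy
      have h3 : |y.re - z₀.re| ≤ ‖y - z₀‖ := by rwa [Complex.sub_re] at h1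
      have := abs_lt.1 (lt_of_le_of_lt h3 h2)
      linarith [this.1]
    have hslit : y ∈ Complex.slitPlane := Complex.mem_slitPlane_iff.2 (Or.inl (by linarith))
    exact ((Complex.hasStrictDerivAt_cpow_const hslit).hasDerivAt).mul_const _

lemma analyticOnNhd_Fc (hβ : -1 < β) (hα : 0 ≤ α) :
    AnalyticOnNhd ℂ (Fc α β) {z : ℂ | 0 < z.re} :=
  DifferentiableOn.analyticOnNhd
    (fun _ hz => (differentiableAt_Fc hβ hα hz).differentiableWithinAt)
    (isOpen_lt continuous_const Complex.continuous_re)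

lemma Fc_ofReal (hx : 0 < x) : Fc α β ((x : ℝ) : ℂ) = ((HH α β 0 x : ℝ) : ℂ) := by
  rw [Fc, HH]
  have h1 : (∫ t in Ioi (0:ℝ), ((x : ℝ) : ℂ) ^ (((-(t + α) : ℝ)) : ℂ) * ((cc α β t : ℝ) : ℂ))
      = ∫ t in Ioi (0:ℝ), ((gg α β 0 x t : ℝ) : ℂ) := by
    refine setIntegral_congr_fun measurableSet_Ioi fun t _ => ?_
    have h2 : gg α β 0 x t = x ^ (-(t + α)) * cc α β t := by simp [gg]
    rw [h2, Complex.ofReal_mul, Complex.ofReal_cpow hx.le]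
  rw [h1]
  exact integral_ofReal

/-! ### Log-convexity via Hölder -/

noncomputable def uu (α β z t : ℝ) : ℝ := z ^ (-(t + α)) * cc α β t

lemma uu_nonneg (hβ : -1 < β) (hα : 0 ≤ α) {z : ℝ} (hz : 0 < z) {t : ℝ} (ht : 0 < t) :
    0 ≤ uu α β z t :=
  mul_nonneg (Real.rpow_nonneg hz.le _) (cc_pos hβ hα ht).le

lemma contOn_uu (hβ : -1 < β) (hα : 0 ≤ α) {z : ℝ} (hz : 0 < z) :
    ContinuousOn (uu α β z) (Ioi 0) := by
  apply ContinuousOn.mul _ (contOn_cc hα hβ)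
  have : (fun t : ℝ => z ^ (-(t + α)))
      = fun t : ℝ => Real.exp (Real.log z * (-(t + α))) := by
    funext t; rw [Real.rpow_def_of_pos hz]
  rw [this]
  fun_prop

lemma uu_integrableOn (hβ : -1 < β) (hα : 0 ≤ α) {z : ℝ} (hz : 0 < z) :
    IntegrableOn (uu α β z) (Ioi 0) := by
  apply (gg_integrableOn (n := 0) hβ hα hz).congr
  refine ae_of_all _ fun t => ?_
  simp [gg, uu]

lemma HH_zero_eq {z : ℝ} : HH α β 0 z = ∫ t in Ioi (0:ℝ), uu α β z t := by
  rw [HH]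
  refine setIntegral_congr_fun measurableSet_Ioi fun t _ => ?_
  simp [gg, uu]

lemma memLp_uu (hβ : -1 < β) (hα : 0 ≤ α) {c z : ℝ} (hc : 0 < c) (hz : 0 < z) :
    MemLp (fun t => uu α β z t ^ c) (ENNReal.ofReal (1 / c)) (volume.restrict (Ioi (0:ℝ))) := by
  have A : ENNReal.ofReal (1 / c) ≠ 0 := by
    rwa [Ne, ENNReal.ofReal_eq_zero, not_le, one_div_pos]
  have B : ENNReal.ofReal (1 / c) ≠ ⊤ := ENNReal.ofReal_ne_top
  have hmeas : AEStronglyMeasurable (fun t => uu α β z t ^ c)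
      (volume.restrict (Ioi (0:ℝ))) :=
    ((contOn_uu hβ hα hz).rpow_const fun t _ => Or.inr hc.le).aestronglyMeasurable
      measurableSet_Ioi
  rw [← memLp_norm_rpow_iff hmeas A B, ENNReal.toReal_ofReal (by positivity),
    ENNReal.div_self A B, memLp_one_iff_integrable]
  apply (uu_integrableOn hβ hα hz).congr
  refine Filter.eventuallyEq_of_mem (self_mem_ae_restrict measurableSet_Ioi) fun t ht => ?_
  have hu0 : 0 ≤ uu α β z t := uu_nonneg hβ hα hz ht
  rw [Real.norm_eq_abs, abs_of_nonneg (Real.rpow_nonneg hu0 c), ← Real.rpow_mul hu0,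
    mul_one_div_cancel hc.ne', Real.rpow_one]

lemma HH_holder (hβ : -1 < β) (hα : 0 ≤ α) {x y a b : ℝ} (hx : 0 < x) (hy : 0 < y)
    (ha : 0 < a) (hb : 0 < b) (hab : a + b = 1) :
    HH α β 0 (a * x + b * y) ≤ HH α β 0 x ^ a * HH α β 0 y ^ b := by
  have e : (1 / a).HolderConjugate (1 / b) := Real.holderConjugate_one_div ha hb hab
  have hz : 0 < a * x + b * y := by positivity
  have posf : ∀ᵐ t ∂(volume.restrict (Ioi (0:ℝ))), 0 ≤ uu α β x t ^ a :=
    (ae_restrict_iff' measurableSet_Ioi).2 (ae_of_all _ fun t ht =>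
      Real.rpow_nonneg (uu_nonneg hβ hα hx ht) a)
  have posg : ∀ᵐ t ∂(volume.restrict (Ioi (0:ℝ))), 0 ≤ uu α β y t ^ b :=
    (ae_restrict_iff' measurableSet_Ioi).2 (ae_of_all _ fun t ht =>
      Real.rpow_nonneg (uu_nonneg hβ hα hy ht) b)
  -- the product is integrable (Hölder)
  have hfg_int : Integrable (fun t => uu α β x t ^ a * uu α β y t ^ b)
      (volume.restrict (Ioi (0:ℝ))) := by
    rw [← memLp_one_iff_integrable]
    have hpqr : (1 : ENNReal) / 1
        = 1 / ENNReal.ofReal (1 / a) + 1 / ENNReal.ofReal (1 / b) := by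
      have h1 : ENNReal.ofReal (1 / a) = (ENNReal.ofReal a)⁻¹ := by
        rw [one_div, ENNReal.ofReal_inv_of_pos ha]
      have h2 : ENNReal.ofReal (1 / b) = (ENNReal.ofReal b)⁻¹ := by
        rw [one_div, ENNReal.ofReal_inv_of_pos hb]
      rw [h1, h2, one_div, one_div, one_div, inv_inv, inv_inv, inv_one,
        ← ENNReal.ofReal_add ha.le hb.le, hab, ENNReal.ofReal_one]
    haveI : ENNReal.HolderTriple (ENNReal.ofReal (1 / a)) (ENNReal.ofReal (1 / b)) 1 :=
      ⟨by simpa only [one_div] using hpqr.symm⟩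
    have := MemLp.smul (𝕜 := ℝ) (r := 1) (memLp_uu hβ hα hb hy) (memLp_uu hβ hα ha hx)
    exact this
  -- pointwise bound for the left side
  have hL : HH α β 0 (a * x + b * y)
      ≤ ∫ t in Ioi (0:ℝ), uu α β x t ^ a * uu α β y t ^ b := by
    rw [HH_zero_eq]
    apply integral_mono_of_nonneg
    · exact (ae_restrict_iff' measurableSet_Ioi).2 (ae_of_all _ fun t ht =>
        uu_nonneg hβ hα hz ht)
    · exact hfg_int
    · refine (ae_restrict_iff' measurableSet_Ioi).2 (ae_of_all _ fun t ht => ?_)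
      have ht0 : (0:ℝ) < t := ht
      have hcc : 0 < cc α β t := cc_pos hβ hα ht0
      have hgm : x ^ a * y ^ b ≤ a * x + b * y :=
        Real.geom_mean_le_arith_mean2_weighted ha.le hb.le hx.le hy.le hab
      have hxy : 0 < x ^ a * y ^ b := by positivity
      have h1 : (a * x + b * y) ^ (-(t + α)) ≤ (x ^ a * y ^ b) ^ (-(t + α)) :=
        Real.rpow_le_rpow_of_nonpos hxy hgm (by linarith)
      have h2 : (x ^ a * y ^ b) ^ (-(t + α))
          = (x ^ (-(t + α))) ^ a * (y ^ (-(t + α))) ^ b := by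
        rw [Real.mul_rpow (Real.rpow_nonneg hx.le a) (Real.rpow_nonneg hy.le b),
          ← Real.rpow_mul hx.le, ← Real.rpow_mul hy.le,
          ← Real.rpow_mul hx.le, ← Real.rpow_mul hy.le, mul_comm a, mul_comm b]
      have h3 : uu α β x t ^ a * uu α β y t ^ b
          = (x ^ (-(t + α))) ^ a * (y ^ (-(t + α))) ^ b * cc α β t := by
        unfold uu
        rw [Real.mul_rpow (Real.rpow_nonneg hx.le _) hcc.le,
          Real.mul_rpow (Real.rpow_nonneg hy.le _) hcc.le]
        calc (x ^ (-(t + α))) ^ a * cc α β t ^ a * ((y ^ (-(t + α))) ^ b * cc α β t ^ b)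
            = (x ^ (-(t + α))) ^ a * (y ^ (-(t + α))) ^ b
              * (cc α β t ^ a * cc α β t ^ b) := by ring
          _ = (x ^ (-(t + α))) ^ a * (y ^ (-(t + α))) ^ b * cc α β t := by
              rw [← Real.rpow_add hcc, hab, Real.rpow_one]
      show uu α β (a * x + b * y) t ≤ uu α β x t ^ a * uu α β y t ^ b
      rw [h3]
      unfold uu
      exact mul_le_mul_of_nonneg_right (le_of_le_of_eq h1 h2) hcc.le
  -- Hölder for the right side
  have hR : (∫ t in Ioi (0:ℝ), uu α β x t ^ a * uu α β y t ^ b)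
      ≤ HH α β 0 x ^ a * HH α β 0 y ^ b := by
    have h := integral_mul_le_Lp_mul_Lq_of_nonneg e posf posg
      (memLp_uu hβ hα ha hx) (memLp_uu hβ hα hb hy)
    rw [one_div_one_div, one_div_one_div] at h
    have e1 : (∫ t in Ioi (0:ℝ), (uu α β x t ^ a) ^ (1 / a)) = HH α β 0 x := by
      rw [HH_zero_eq]
      refine setIntegral_congr_fun measurableSet_Ioi fun t ht => ?_
      rw [← Real.rpow_mul (uu_nonneg hβ hα hx ht), mul_one_div_cancel ha.ne', Real.rpow_one]
    have e2 : (∫ t in Ioi (0:ℝ), (uu α β y t ^ b) ^ (1 / b)) = HH α β 0 y := by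
      rw [HH_zero_eq]
      refine setIntegral_congr_fun measurableSet_Ioi fun t ht => ?_
      rw [← Real.rpow_mul (uu_nonneg hβ hα hy ht), mul_one_div_cancel hb.ne', Real.rpow_one]
    rw [e1, e2] at h
    exact h
  exact le_trans hL hR

end VolterraAux

open VolterraAux

/-- For `β > -1` and `α ≥ 0`, the function `x ↦ μ(x⁻¹, β, α)` is completely monotonic
on `(0, ∞)`, and in particular log-convex there. -/
theorem volterraMu_inv_completely_monotonic (α β : ℝ) (hβ : -1 < β) (hα : 0 ≤ α) :
    ContDiffOn ℝ (⊤ : ℕ∞) (fun x : ℝ => volterraMu x⁻¹ β α) (Set.Ioi 0) ∧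
    (∀ (n : ℕ) (x : ℝ), x ∈ Set.Ioi (0 : ℝ) →
      0 ≤ (-1 : ℝ) ^ n *
        iteratedDerivWithin n (fun x : ℝ => volterraMu x⁻¹ β α) (Set.Ioi 0) x) ∧
    ConvexOn ℝ (Set.Ioi 0) (fun x : ℝ => Real.log (volterraMu x⁻¹ β α)) := by
  have hEq : ∀ z : ℝ, 0 < z → volterraMu z⁻¹ β α = HH α β 0 z := by
    intro z hz
    rw [volterraMu, HH]
    refine setIntegral_congr_fun measurableSet_Ioi fun t _ => ?_
    simp only [gg, Finset.range_zero, Finset.prod_empty, one_mul, Nat.cast_zero, sub_zero, cc]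
    rw [Real.inv_rpow hz.le, ← Real.rpow_neg hz.le, mul_div_assoc]
  have hAnn : AnalyticOnNhd ℝ (fun x : ℝ => volterraMu x⁻¹ β α) (Ioi 0) := by
    intro x hx
    have hx0 : (0:ℝ) < x := hx
    have h1 : AnalyticAt ℝ (fun x : ℝ => ((x : ℝ) : ℂ)) x := Complex.ofRealCLM.analyticAt x
    have h2 : AnalyticAt ℂ (Fc α β) ((x : ℝ) : ℂ) :=
      analyticOnNhd_Fc hβ hα _ (by simpa using hx0)
    have h4 : AnalyticAt ℝ (fun x : ℝ => Fc α β ((x : ℝ) : ℂ)) x := h2.restrictScalars.comp h1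
    have h5 : AnalyticAt ℝ (fun x : ℝ => (Fc α β ((x : ℝ) : ℂ)).re) x :=
      (Complex.reCLM.analyticAt _).comp h4
    apply h5.congr
    filter_upwards [isOpen_Ioi.mem_nhds hx] with y hy
    rw [Fc_ofReal hy, Complex.ofReal_re]
    exact (hEq y hy).symm
  refine ⟨hAnn.contDiffOn (uniqueDiffOn_Ioi 0), ?_, ?_⟩
  · have hIter : ∀ n : ℕ, ∀ x ∈ Ioi (0:ℝ),
        iteratedDerivWithin n (fun x : ℝ => volterraMu x⁻¹ β α) (Ioi 0) x
          = (-1) ^ n * HH α β n x := by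
      intro n
      induction n with
      | zero =>
        intro x hx
        rw [iteratedDerivWithin_zero, pow_zero, one_mul]
        exact hEq x hx
      | succ n ih =>
        intro x hx
        rw [iteratedDerivWithin_succ,
          derivWithin_congr (fun y hy => ih y hy) (ih x hx),
          derivWithin_of_isOpen isOpen_Ioi hx]
        have hD : HasDerivAt (fun y => (-1:ℝ) ^ n * HH α β n y)
            ((-1:ℝ) ^ n * -(HH α β (n + 1) x)) x := (hasDerivAt_HH hβ hα hx).const_mul _
        rw [hD.deriv]
        ring
    intro n x hx
    rw [hIter n x hx, ← mul_assoc, ← pow_add]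
    rw [Even.neg_one_pow (⟨n, rfl⟩ : Even (n + n)), one_mul]
    exact HH_nonneg hβ hα hx
  · refine convexOn_iff_forall_pos.mpr ⟨convex_Ioi _, fun x hx y hy a b ha hb hab => ?_⟩
    simp only [smul_eq_mul]
    have hx0 : (0:ℝ) < x := hx
    have hy0 : (0:ℝ) < y := hy
    have hz0 : 0 < a * x + b * y := add_pos (mul_pos ha hx0) (mul_pos hb hy0)
    rw [hEq x hx0, hEq y hy0, hEq _ hz0]
    have h1 := HH_pos hβ hα hx0
    have h2 := HH_pos hβ hα hy0
    have h3 := HH_pos hβ hα hz0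
    have key := HH_holder hβ hα hx0 hy0 ha hb hab
    calc Real.log (HH α β 0 (a * x + b * y))
        ≤ Real.log (HH α β 0 x ^ a * HH α β 0 y ^ b) := Real.log_le_log h3 key
      _ = a * Real.log (HH α β 0 x) + b * Real.log (HH α β 0 y) := by
          rw [Real.log_mul (Real.rpow_pos_of_pos h1 a).ne' (Real.rpow_pos_of_pos h2 b).ne',
            Real.log_rpow h1, Real.log_rpow h2]
end

section
/- For fixed x > 0 and α > -1, the function β ↦ μ(x, β, α) is log-concave on (-1, ∞): for all β₁, β₂ > -1 and all λ ∈ [0, 1], one has μ(x, λβ₁ + (1-λ)β₂, α) ≥ μ(x, β₁, α)^λ · μ(x, β₂, α)^(1-λ). -/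
/-!
With `f t = x ^ (t + α) / Γ(t + α + 1)` and `F β = ∫₀^∞ f t t^β dt` we have
`μ(x, β, α) = F β / Γ(β + 1)`, and `f` is log-concave on `(0, ∞)` because `Γ` is log-convex.
For any positive log-concave `f` the normalised moments `F β / Γ(β + 1)` are log-concave.
Substituting `s = wσ`, `t = w(1 - σ)`,
`F a F b = ∫₀^∞ w^(a+b+1) ∫₀¹ f(wσ) f(w(1-σ)) σ^a (1-σ)^b dσ dw`.
With `c = (a + b)/2` and `δ = (a - b)/2`, the kernel `σ^a (1-σ)^b`, symmetrised under
`σ ↦ 1 - σ`, equals `(σ(1-σ))^c cosh(δ log(σ/(1-σ)))`. The cosh factor decreases as `σ(1-σ)`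
grows, while `f(wσ) f(w(1-σ))` increases with it, by log-concavity of `f`. So Chebyshev's integral
inequality gives `F a F b B(c+1, c+1) ≤ F c ^ 2 B(a+1, b+1)`. Evaluating the Beta integrals turns
this into midpoint log-concavity of `F β / Γ(β + 1)`, and continuity in `β` upgrades that to
log-concavity.
-/

open MeasureTheory Real Set

open Filter

theorem nonneg_on_Icc_of_midpoint_concave {h : ℝ → ℝ} (hc : ContinuousOn h (Icc 0 1))
    (h0 : 0 ≤ h 0) (h1 : 0 ≤ h 1)
    (hmid : ∀ s ∈ Icc (0 : ℝ) 1, ∀ t ∈ Icc (0 : ℝ) 1, h s + h t ≤ 2 * h ((s + t) / 2)) :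
    ∀ t ∈ Icc (0 : ℝ) 1, 0 ≤ h t := by
  by_contra! hneg
  obtain ⟨t₀, ht₀, hmin⟩ := isCompact_Icc.exists_isMinOn (nonempty_Icc.2 zero_le_one) hc
  have hm : h t₀ < 0 := by
    obtain ⟨t, ht, hlt⟩ := hneg
    exact (hmin ht).trans_lt hlt
  -- at the leftmost minimiser `t₁`, the midpoint inequality for `t₁ ± d` fails
  set Z := Icc (0 : ℝ) 1 ∩ h ⁻¹' {h t₀}
  have hZ : IsClosed Z := hc.preimage_isClosed_of_isClosed isClosed_Icc isClosed_singleton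
  have ht₁ : sInf Z ∈ Z := hZ.csInf_mem ⟨t₀, ht₀, rfl⟩ ⟨0, fun t ht => ht.1.1⟩
  set t₁ := sInf Z
  have hpos : 0 < t₁ := lt_of_le_of_ne ht₁.1.1 fun h' => by
    have := ht₁.2; simp only [mem_preimage, mem_singleton_iff, ← h'] at this; linarith
  have hlt1 : t₁ < 1 := lt_of_le_of_ne ht₁.1.2 fun h' => by
    have := ht₁.2; simp only [mem_preimage, mem_singleton_iff, h'] at this; linarith
  set d := min t₁ (1 - t₁)
  have hd : 0 < d := lt_min hpos (by linarith)
  have hl : t₁ - d ∈ Icc (0 : ℝ) 1 := ⟨by linarith [min_le_left t₁ (1 - t₁)], by linarith⟩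
  have hr : t₁ + d ∈ Icc (0 : ℝ) 1 := ⟨by linarith, by linarith [min_le_right t₁ (1 - t₁)]⟩
  have hleft : h t₀ < h (t₁ - d) := by
    refine lt_of_le_of_ne (hmin hl) fun heq => ?_
    have : t₁ ≤ t₁ - d := csInf_le ⟨0, fun t ht => ht.1.1⟩ ⟨hl, heq.symm⟩
    linarith
  have := hmid _ hl _ hr
  rw [show (t₁ - d + (t₁ + d)) / 2 = t₁ by ring, ht₁.2] at this
  have hright : h t₀ ≤ h (t₁ + d) := hmin hr
  linarith

theorem concaveOn_of_midpoint {E : Type*} [AddCommGroup E] [Module ℝ E] [TopologicalSpace E]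
    [IsTopologicalAddGroup E] [ContinuousSMul ℝ E] {s : Set E} {φ : E → ℝ} (hs : Convex ℝ s)
    (hφ : ContinuousOn φ s)
    (hmid : ∀ x ∈ s, ∀ y ∈ s, φ x + φ y ≤ 2 * φ (midpoint ℝ x y)) :
    ConcaveOn ℝ s φ := by
  refine ⟨hs, fun x hx y hy a b ha _ hab => ?_⟩
  obtain rfl : b = 1 - a := by linarith
  set P : ℝ → E := fun t => t • x + (1 - t) • y
  have hP : ∀ t ∈ Icc (0 : ℝ) 1, P t ∈ s := fun t ht =>
    hs hx hy ht.1 (sub_nonneg.2 ht.2) (by ring)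
  have key := nonneg_on_Icc_of_midpoint_concave (h := fun t => φ (P t) - (t * φ x + (1 - t) * φ y))
    ((hφ.comp (by fun_prop : Continuous P).continuousOn hP).sub (by fun_prop))
    (by simp [P]) (by simp [P])
    (fun u hu v hv => by
      have hPm : midpoint ℝ (P u) (P v) = P ((u + v) / 2) := by
        simp only [P, midpoint_eq_smul_add, invOf_eq_inv]; module
      have := hmid _ (hP u hu) _ (hP v hv)
      rw [hPm] at this
      linarith)
    a ⟨ha, by linarith⟩
  simpa [P, smul_eq_mul] using key

theorem AntivaryOn.integral_mul_integral_le_integral_mul_integral {α : Type*} [MeasurableSpace α]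
    {μ : Measure α} {s : Set α} {g r m : α → ℝ} (hgr : AntivaryOn g r s)
    (hs : ∀ᵐ x ∂μ, x ∈ s) (hm : ∀ x ∈ s, 0 ≤ m x) (hm_int : Integrable m μ)
    (hrm : Integrable (fun x => r x * m x) μ) (hgm : Integrable (fun x => g x * m x) μ)
    (hgrm : Integrable (fun x => g x * (r x * m x)) μ) :
    (∫ x, g x * (r x * m x) ∂μ) * ∫ x, m x ∂μ ≤ (∫ x, g x * m x ∂μ) * ∫ x, r x * m x ∂μ := by
  set M := ∫ x, m x ∂μ
  set RM := ∫ x, r x * m x ∂μ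
  set GM := ∫ x, g x * m x ∂μ
  set GRM := ∫ x, g x * (r x * m x) ∂μ
  have inner : ∀ σ, ∫ τ, (g σ - g τ) * (r σ - r τ) * (m σ * m τ) ∂μ =
      g σ * (r σ * m σ) * M - g σ * m σ * RM - r σ * m σ * GM + m σ * GRM := by
    intro σ
    have e : (fun τ => (g σ - g τ) * (r σ - r τ) * (m σ * m τ)) = fun τ =>
        g σ * (r σ * m σ) * m τ - g σ * m σ * (r τ * m τ) - r σ * m σ * (g τ * m τ)
          + m σ * (g τ * (r τ * m τ)) := funext fun τ => by ring
    rw [e, integral_add, integral_sub, integral_sub, integral_const_mul, integral_const_mul,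
      integral_const_mul, integral_const_mul]
    all_goals fun_prop
  have outer : ∫ σ, (g σ * (r σ * m σ) * M - g σ * m σ * RM - r σ * m σ * GM + m σ * GRM) ∂μ =
      2 * (GRM * M - GM * RM) := by
    rw [integral_add, integral_sub, integral_sub, integral_mul_const, integral_mul_const,
      integral_mul_const, integral_mul_const]
    · ring
    all_goals fun_prop
  have hnonpos : ∫ σ, ∫ τ, (g σ - g τ) * (r σ - r τ) * (m σ * m τ) ∂μ ∂μ ≤ 0 := by
    refine integral_nonpos_of_ae ?_
    filter_upwards [hs] with σ hσ
    refine integral_nonpos_of_ae ?_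
    filter_upwards [hs] with τ hτ
    exact mul_nonpos_of_nonpos_of_nonneg (by nlinarith [hgr.sub_mul_sub_nonpos hτ hσ])
      (mul_nonneg (hm σ hσ) (hm τ hτ))
  simp only [inner, outer] at hnonpos
  linarith

theorem ConcaveOn.add_le_add_of_abs_sub_le {s : Set ℝ} {ψ : ℝ → ℝ} (hψ : ConcaveOn ℝ s ψ)
    {p q p' q' : ℝ} (hp' : p' ∈ s) (hq' : q' ∈ s) (hsum : p + q = p' + q')
    (habs : |p - q| ≤ |p' - q'|) : ψ p' + ψ q' ≤ ψ p + ψ q := by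
  rcases eq_or_ne p' q' with rfl | hne
  · obtain rfl : p = q := by simpa [sub_eq_zero] using habs
    obtain rfl : p = p' := by linarith
    rfl
  -- `p` and `q` are the convex combinations `θ p' + (1 - θ) q'` and `(1 - θ) p' + θ q'`
  have hd : p' - q' ≠ 0 := sub_ne_zero.2 hne
  set θ := (p - q') / (p' - q')
  have hc : θ * (p' - q') = p - q' := div_mul_cancel₀ _ hd
  have hp : θ * p' + (1 - θ) * q' = p := by linear_combination hc
  have hq : (1 - θ) * p' + θ * q' = q := by linarith
  have hθ : |2 * θ - 1| ≤ 1 := by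
    refine le_of_mul_le_mul_right ?_ (abs_pos.2 hd)
    rw [← abs_mul, one_mul]
    rw [show (2 * θ - 1) * (p' - q') = p - q by linear_combination 2 * hc + hsum]
    exact habs
  have h1 := hψ.2 hp' hq' (by linarith [(abs_le.1 hθ).1]) (by linarith [(abs_le.1 hθ).2])
    (by ring : θ + (1 - θ) = 1)
  have h2 := hψ.2 hp' hq' (by linarith [(abs_le.1 hθ).2]) (by linarith [(abs_le.1 hθ).1])
    (by ring : (1 - θ) + θ = 1)
  simp only [smul_eq_mul, hp, hq] at h1 h2
  linarith

theorem mul_le_mul_of_concaveOn_log {s : Set ℝ} {f : ℝ → ℝ} (hf : ∀ t ∈ s, 0 < f t)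
    (hlog : ConcaveOn ℝ s fun t => log (f t)) {p q p' q' : ℝ} (hp : p ∈ s) (hq : q ∈ s)
    (hp' : p' ∈ s) (hq' : q' ∈ s) (hsum : p + q = p' + q') (habs : |p - q| ≤ |p' - q'|) :
    f p' * f q' ≤ f p * f q := by
  rw [← log_le_log_iff (mul_pos (hf _ hp') (hf _ hq')) (mul_pos (hf _ hp) (hf _ hq)),
    log_mul (hf _ hp').ne' (hf _ hq').ne', log_mul (hf _ hp).ne' (hf _ hq).ne']
  exact hlog.add_le_add_of_abs_sub_le hp' hq' hsum habs

theorem cosh_log_sub_log_one_sub {σ : ℝ} (hσ : σ ∈ Ioo (0 : ℝ) 1) :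
    cosh (log σ - log (1 - σ)) = 1 / (2 * (σ * (1 - σ))) - 1 := by
  have h0 : 0 < σ := hσ.1
  have h1 : 0 < 1 - σ := sub_pos.2 hσ.2
  rw [cosh_eq, neg_sub, exp_sub, exp_sub, exp_log h0, exp_log h1]
  field_simp
  ring

theorem cosh_mul_rpow_mul_one_sub_rpow {σ : ℝ} (hσ : σ ∈ Ioo (0 : ℝ) 1) (a b : ℝ) :
    cosh ((a - b) / 2 * (log σ - log (1 - σ))) *
        (σ ^ ((a + b) / 2) * (1 - σ) ^ ((a + b) / 2)) =
      (σ ^ a * (1 - σ) ^ b + σ ^ b * (1 - σ) ^ a) / 2 := by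
  simp only [cosh_eq, rpow_def_of_pos hσ.1, rpow_def_of_pos (sub_pos.2 hσ.2), ← exp_add]
  field_simp
  rw [add_mul, ← exp_add, ← exp_add]
  congr 2 <;> ring

theorem antivaryOn_mul_mul_one_sub_cosh {f : ℝ → ℝ} (hf : ∀ t, 0 < t → 0 < f t)
    (hlog : ConcaveOn ℝ (Ioi 0) fun t => log (f t)) {w : ℝ} (hw : 0 < w) (δ : ℝ) :
    AntivaryOn (fun σ => f (w * σ) * f (w * (1 - σ)))
      (fun σ => cosh (δ * (log σ - log (1 - σ)))) (Ioo 0 1) := by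
  intro σ hσ τ hτ hlt
  have hL : |log σ - log (1 - σ)| ≤ |log τ - log (1 - τ)| := by
    rw [cosh_lt_cosh, abs_mul, abs_mul] at hlt
    exact (lt_of_mul_lt_mul_left hlt (abs_nonneg δ)).le
  have hu : τ * (1 - τ) ≤ σ * (1 - σ) := by
    have := cosh_le_cosh.2 hL
    rw [cosh_log_sub_log_one_sub hσ, cosh_log_sub_log_one_sub hτ, sub_le_sub_iff_right,
      one_div_le_one_div (by nlinarith [hσ.1, hσ.2]) (by nlinarith [hτ.1, hτ.2])] at this
    linarith
  have hpos : ∀ x ∈ Ioo (0 : ℝ) 1, w * x ∈ Ioi 0 ∧ w * (1 - x) ∈ Ioi 0 := fun x hx =>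
    ⟨mul_pos hw hx.1, mul_pos hw (sub_pos.2 hx.2)⟩
  refine mul_le_mul_of_concaveOn_log hf hlog (hpos σ hσ).1 (hpos σ hσ).2
    (hpos τ hτ).1 (hpos τ hτ).2 (by ring) ?_
  rw [← mul_sub, ← mul_sub, abs_mul, abs_mul]
  refine mul_le_mul_of_nonneg_left (sq_le_sq.1 ?_) (abs_nonneg w)
  nlinarith

theorem ofReal_rpow_mul_one_sub_rpow {a b σ : ℝ} (hσ : σ ∈ Icc (0 : ℝ) 1) :
    ((σ ^ a * (1 - σ) ^ b : ℝ) : ℂ) =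
      (σ : ℂ) ^ ((a + 1 : ℂ) - 1) * (1 - (σ : ℂ)) ^ ((b + 1 : ℂ) - 1) := by
  rw [add_sub_cancel_right, add_sub_cancel_right, Complex.ofReal_mul,
    Complex.ofReal_cpow hσ.1, Complex.ofReal_cpow (sub_nonneg.2 hσ.2), Complex.ofReal_sub,
    Complex.ofReal_one]

theorem intervalIntegrable_rpow_mul_one_sub_rpow {a b : ℝ} (ha : -1 < a) (hb : -1 < b) :
    IntervalIntegrable (fun σ => σ ^ a * (1 - σ) ^ b) volume 0 1 := by
  have hC := Complex.betaIntegral_convergent (u := a + 1) (v := b + 1)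
    (by simp only [Complex.add_re, Complex.ofReal_re, Complex.one_re]; linarith)
    (by simp only [Complex.add_re, Complex.ofReal_re, Complex.one_re]; linarith)
  rw [intervalIntegrable_iff_integrableOn_Ioc_of_le zero_le_one] at hC ⊢
  refine (hC.congr_fun (fun σ hσ => (ofReal_rpow_mul_one_sub_rpow
    (Ioc_subset_Icc_self hσ)).symm) measurableSet_Ioc).re.congr ?_
  exact Eventually.of_forall fun σ => Complex.ofReal_re _

theorem integral_rpow_mul_one_sub_rpow {a b : ℝ} (ha : -1 < a) (hb : -1 < b) :
    ∫ σ in (0 : ℝ)..1, σ ^ a * (1 - σ) ^ b =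
      Gamma (a + 1) * Gamma (b + 1) / Gamma (a + b + 2) := by
  have h := Complex.Gamma_mul_Gamma_eq_betaIntegral (s := a + 1) (t := b + 1)
    (by simp only [Complex.add_re, Complex.ofReal_re, Complex.one_re]; linarith)
    (by simp only [Complex.add_re, Complex.ofReal_re, Complex.one_re]; linarith)
  rw [Complex.betaIntegral, ← intervalIntegral.integral_congr fun σ hσ =>
    ofReal_rpow_mul_one_sub_rpow (a := a) (b := b) (by rwa [uIcc_of_le zero_le_one] at hσ),
    intervalIntegral.integral_ofReal, show (a + 1 : ℂ) + (b + 1) = ((a + b + 2 : ℝ) : ℂ) by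
      push_cast; ring] at h
  rw [eq_div_iff (Gamma_pos_of_pos (by linarith)).ne']
  apply Complex.ofReal_injective
  push_cast [← Complex.Gamma_ofReal] at h ⊢
  linear_combination -h

theorem integrableOn_Ioo_rpow_mul_one_sub_rpow {a b : ℝ} (ha : -1 < a) (hb : -1 < b) :
    IntegrableOn (fun σ : ℝ => σ ^ a * (1 - σ) ^ b) (Ioo 0 1) :=
  (intervalIntegrable_rpow_mul_one_sub_rpow ha hb).1.mono_set Ioo_subset_Ioc_self

theorem setIntegral_Ioo_mul_add_swap_div_two {h : ℝ → ℝ} (hh : ∀ σ, h (1 - σ) = h σ)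
    (hc : ContinuousOn h (Icc 0 1)) {a b : ℝ} (ha : -1 < a) (hb : -1 < b) :
    ∫ σ in Ioo (0 : ℝ) 1, h σ * ((σ ^ a * (1 - σ) ^ b + σ ^ b * (1 - σ) ^ a) / 2) =
      ∫ σ in Ioo (0 : ℝ) 1, h σ * (σ ^ a * (1 - σ) ^ b) := by
  have hk : ∀ {p q : ℝ}, -1 < p → -1 < q →
      IntegrableOn (fun σ => h σ * (σ ^ p * (1 - σ) ^ q)) (Ioo 0 1) := fun hp hq =>
    (integrableOn_Ioo_rpow_mul_one_sub_rpow hp hq).continuousOn_mul_of_subset hc isCompact_Icc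
      measurableSet_Ioo Ioo_subset_Icc_self
  have hswap : ∫ σ in Ioo (0 : ℝ) 1, h σ * (σ ^ b * (1 - σ) ^ a) =
      ∫ σ in Ioo (0 : ℝ) 1, h σ * (σ ^ a * (1 - σ) ^ b) := by
    have := intervalIntegral.integral_comp_sub_left (a := 0) (b := 1)
      (fun σ => h σ * (σ ^ a * (1 - σ) ^ b)) 1
    simp only [sub_sub_cancel, hh, sub_zero, sub_self, intervalIntegral.integral_of_le zero_le_one,
      integral_Ioc_eq_integral_Ioo] at this
    rw [← this]
    congr 1 with σ
    ring
  simp only [mul_div_assoc', mul_add]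
  rw [integral_div, integral_add (hk ha hb) (hk hb ha), hswap, add_self_div_two]

theorem intervalIntegral_mul_rpow_mul_sub_rpow {f g : ℝ → ℝ} {a b w : ℝ} (hw : 0 < w) :
    ∫ t in (0 : ℝ)..w, f t * t ^ a * (g (w - t) * (w - t) ^ b) =
      w ^ (a + b + 1) *
        ∫ σ in (0 : ℝ)..1, f (w * σ) * g (w * (1 - σ)) * (σ ^ a * (1 - σ) ^ b) := by
  have hscale := intervalIntegral.smul_integral_comp_mul_left (a := 0) (b := 1)
    (fun t => f t * t ^ a * (g (w - t) * (w - t) ^ b)) w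
  rw [mul_zero, mul_one, smul_eq_mul] at hscale
  rw [← hscale, ← intervalIntegral.integral_const_mul, ← intervalIntegral.integral_const_mul]
  refine intervalIntegral.integral_congr fun σ hσ => ?_
  rw [uIcc_of_le zero_le_one] at hσ
  rw [show w - w * σ = w * (1 - σ) by ring, mul_rpow hw.le hσ.1,
    mul_rpow hw.le (sub_nonneg.2 hσ.2), rpow_add_one hw.ne', rpow_add hw]
  ring

theorem setIntegral_mul_rpow_mul_setIntegral_eq {f g : ℝ → ℝ} {a b : ℝ}
    (hf : IntegrableOn (fun t => f t * t ^ a) (Ioi 0))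
    (hg : IntegrableOn (fun t => g t * t ^ b) (Ioi 0)) :
    (∫ t in Ioi 0, f t * t ^ a) * (∫ t in Ioi 0, g t * t ^ b) =
      ∫ w in Ioi 0, w ^ (a + b + 1) *
        ∫ σ in (0 : ℝ)..1, f (w * σ) * g (w * (1 - σ)) * (σ ^ a * (1 - σ) ^ b) := by
  have h := integral_posConvolution hf hg (ContinuousLinearMap.mul ℝ ℝ)
  simp only [ContinuousLinearMap.mul_apply'] at h
  rw [← h]
  exact setIntegral_congr_fun measurableSet_Ioi fun w hw =>
    intervalIntegral_mul_rpow_mul_sub_rpow hw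

theorem integrableOn_rpow_mul_intervalIntegral {f g : ℝ → ℝ} {a b : ℝ}
    (hf : IntegrableOn (fun t => f t * t ^ a) (Ioi 0))
    (hg : IntegrableOn (fun t => g t * t ^ b) (Ioi 0)) :
    IntegrableOn (fun w => w ^ (a + b + 1) *
      ∫ σ in (0 : ℝ)..1, f (w * σ) * g (w * (1 - σ)) * (σ ^ a * (1 - σ) ^ b)) (Ioi 0) := by
  have h := integrable_posConvolution (μ := volume) hf hg (ContinuousLinearMap.mul ℝ ℝ)
  rw [posConvolution, integrable_indicator_iff measurableSet_Ioi] at h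
  simp only [ContinuousLinearMap.mul_apply'] at h
  exact h.congr_fun (fun w hw => intervalIntegral_mul_rpow_mul_sub_rpow hw) measurableSet_Ioi

theorem continuousOn_Gamma_Ioi : ContinuousOn Gamma (Ioi 0) := fun s (hs : 0 < s) =>
  (differentiableAt_Gamma fun m h => by linarith [(Nat.cast_nonneg m : (0 : ℝ) ≤ m)]
    ).continuousAt.continuousWithinAt

theorem rpow_le_rpow_add_rpow {t p q b : ℝ} (ht : 0 < t) (hp : p ≤ b) (hq : b ≤ q) :
    t ^ b ≤ t ^ p + t ^ q := by
  rcases le_total t 1 with h | h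
  · linarith [rpow_le_rpow_of_exponent_ge ht h hp, rpow_nonneg ht.le q]
  · linarith [rpow_le_rpow_of_exponent_le h hq, rpow_nonneg ht.le p]

noncomputable def normalizedMoment (f : ℝ → ℝ) (β : ℝ) : ℝ :=
  (∫ t in Ioi 0, f t * t ^ β) / Gamma (β + 1)

theorem setIntegral_mul_rpow_pos {f : ℝ → ℝ} (hf_pos : ∀ t, 0 < t → 0 < f t) {β : ℝ}
    (hint : IntegrableOn (fun t => f t * t ^ β) (Ioi 0)) :
    0 < ∫ t in Ioi 0, f t * t ^ β := by
  have hpos : ∀ t ∈ Ioi (0 : ℝ), 0 < f t * t ^ β := fun t ht =>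
    mul_pos (hf_pos t ht) (rpow_pos_of_pos ht β)
  rw [setIntegral_pos_iff_support_of_nonneg_ae
    ((ae_restrict_iff' measurableSet_Ioi).2 (Eventually.of_forall fun t ht => (hpos t ht).le)) hint]
  rw [show Function.support (fun t => f t * t ^ β) ∩ Ioi 0 = Ioi 0 from
    inter_eq_right.2 fun t ht => (hpos t ht).ne', volume_Ioi]
  exact ENNReal.zero_lt_top

theorem normalizedMoment_pos {f : ℝ → ℝ} (hf_pos : ∀ t, 0 < t → 0 < f t) {β : ℝ}
    (hint : IntegrableOn (fun t => f t * t ^ β) (Ioi 0)) (hβ : β ∈ Ioi (-1)) :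
    0 < normalizedMoment f β :=
  div_pos (setIntegral_mul_rpow_pos hf_pos hint)
    (Gamma_pos_of_pos (by linarith [mem_Ioi.1 hβ]))

theorem continuousOn_setIntegral_mul_rpow {f : ℝ → ℝ}
    (hint : ∀ β : ℝ, -1 < β → IntegrableOn (fun t => f t * t ^ β) (Ioi 0)) :
    ContinuousOn (fun β : ℝ => ∫ t in Ioi 0, f t * t ^ β) (Ioi (-1)) := by
  intro β (hβ : (-1 : ℝ) < β)
  set ε := (β + 1) / 2 with hε
  refine ContinuousAt.continuousWithinAt (continuousAt_of_dominated
    (bound := fun t => ‖f t * t ^ (β - ε)‖ + ‖f t * t ^ (β + ε)‖) ?_ ?_ ?_ ?_)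
  · filter_upwards [isOpen_Ioi.mem_nhds hβ] with b hb using (hint b hb).aestronglyMeasurable
  · filter_upwards [Ioo_mem_nhds (by linarith : β - ε < β) (by linarith : β < β + ε)] with b hb
    filter_upwards [ae_restrict_mem measurableSet_Ioi] with t (ht : 0 < t)
    simp only [norm_mul, norm_of_nonneg (rpow_nonneg ht.le _), ← mul_add]
    exact mul_le_mul_of_nonneg_left (rpow_le_rpow_add_rpow ht hb.1.le hb.2.le) (norm_nonneg _)
  · exact ((hint _ (by linarith)).norm.add (hint _ (by linarith)).norm)
  · filter_upwards [ae_restrict_mem measurableSet_Ioi] with t (ht : 0 < t)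
    exact continuousAt_const.mul (continuousAt_const_rpow ht.ne')

section LogConcave

variable {f : ℝ → ℝ} (hf_cont : ContinuousOn f (Ici 0)) (hf_pos : ∀ t, 0 < t → 0 < f t)
  (hlog : ConcaveOn ℝ (Ioi 0) fun t => log (f t))
include hf_cont hf_pos hlog

theorem intervalIntegral_mul_rpow_mul_integral_le_of_concaveOn_log {w a b : ℝ} (hw : 0 < w)
    (ha : -1 < a) (hb : -1 < b) :
    (∫ σ in (0 : ℝ)..1, f (w * σ) * f (w * (1 - σ)) * (σ ^ a * (1 - σ) ^ b)) *
        (∫ σ in (0 : ℝ)..1, σ ^ ((a + b) / 2) * (1 - σ) ^ ((a + b) / 2)) ≤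
      (∫ σ in (0 : ℝ)..1,
          f (w * σ) * f (w * (1 - σ)) * (σ ^ ((a + b) / 2) * (1 - σ) ^ ((a + b) / 2))) *
        ∫ σ in (0 : ℝ)..1, σ ^ a * (1 - σ) ^ b := by
  set c := (a + b) / 2
  set S : ℝ → ℝ := fun σ => f (w * σ) * f (w * (1 - σ))
  set r : ℝ → ℝ := fun σ => cosh ((a - b) / 2 * (log σ - log (1 - σ)))
  have hc : -1 < c := by simp only [c]; linarith
  have hS_cont : ContinuousOn S (Icc 0 1) :=
    (hf_cont.comp (by fun_prop) fun σ hσ => mul_nonneg hw.le hσ.1).mul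
      (hf_cont.comp (by fun_prop) fun σ hσ => mul_nonneg hw.le (sub_nonneg.2 hσ.2))
  have hS_symm : ∀ σ, S (1 - σ) = S σ := fun σ => by simp only [S, sub_sub_cancel, mul_comm]
  have hS_mul : ∀ {u : ℝ → ℝ}, IntegrableOn u (Ioo 0 1) →
      IntegrableOn (fun σ => S σ * u σ) (Ioo 0 1) := fun hu =>
    hu.continuousOn_mul_of_subset hS_cont isCompact_Icc measurableSet_Ioo Ioo_subset_Icc_self
  have hm := integrableOn_Ioo_rpow_mul_one_sub_rpow hc hc
  have hrm_eq : EqOn (fun σ => r σ * (σ ^ c * (1 - σ) ^ c))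
      (fun σ => (σ ^ a * (1 - σ) ^ b + σ ^ b * (1 - σ) ^ a) / 2) (Ioo 0 1) :=
    fun σ hσ => cosh_mul_rpow_mul_one_sub_rpow hσ a b
  have hrm : IntegrableOn (fun σ => r σ * (σ ^ c * (1 - σ) ^ c)) (Ioo 0 1) :=
    IntegrableOn.congr_fun (((integrableOn_Ioo_rpow_mul_one_sub_rpow ha hb).add
      (integrableOn_Ioo_rpow_mul_one_sub_rpow hb ha)).div_const 2) hrm_eq.symm measurableSet_Ioo
  have cheb := AntivaryOn.integral_mul_integral_le_integral_mul_integral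
    (μ := volume.restrict (Ioo (0 : ℝ) 1)) (antivaryOn_mul_mul_one_sub_cosh hf_pos hlog hw _)
    (ae_restrict_mem measurableSet_Ioo)
    (fun σ hσ => mul_nonneg (rpow_nonneg hσ.1.le _) (rpow_nonneg (sub_pos.2 hσ.2).le _))
    hm hrm (hS_mul hm) (hS_mul hrm)
  have hone := setIntegral_Ioo_mul_add_swap_div_two (h := fun _ => 1) (fun _ => rfl)
    continuousOn_const ha hb
  simp only [one_mul] at hone
  rw [setIntegral_congr_fun measurableSet_Ioo fun σ hσ => congrArg (S σ * ·) (hrm_eq hσ),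
    setIntegral_congr_fun measurableSet_Ioo hrm_eq,
    setIntegral_Ioo_mul_add_swap_div_two hS_symm hS_cont ha hb, hone] at cheb
  simpa only [intervalIntegral.integral_of_le zero_le_one, integral_Ioc_eq_integral_Ioo]
    using cheb

variable (hint : ∀ β : ℝ, -1 < β → IntegrableOn (fun t => f t * t ^ β) (Ioi 0))
include hint

theorem normalizedMoment_mul_le_sq {a b : ℝ} (ha : -1 < a) (hb : -1 < b) :
    normalizedMoment f a * normalizedMoment f b ≤ normalizedMoment f ((a + b) / 2) ^ 2 := by
  set c := (a + b) / 2
  have hc : -1 < c := by simp only [c]; linarith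
  have hcc : c + c = a + b := by simp only [c]; ring
  have key : (∫ t in Ioi 0, f t * t ^ a) * (∫ t in Ioi 0, f t * t ^ b) *
        ∫ σ in (0 : ℝ)..1, σ ^ c * (1 - σ) ^ c ≤
      (∫ t in Ioi 0, f t * t ^ c) * (∫ t in Ioi 0, f t * t ^ c) *
        ∫ σ in (0 : ℝ)..1, σ ^ a * (1 - σ) ^ b := by
    rw [setIntegral_mul_rpow_mul_setIntegral_eq (hint a ha) (hint b hb),
      setIntegral_mul_rpow_mul_setIntegral_eq (hint c hc) (hint c hc), ← integral_mul_const,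
      ← integral_mul_const]
    refine setIntegral_mono_on
      ((integrableOn_rpow_mul_intervalIntegral (hint a ha) (hint b hb)).mul_const _)
      ((integrableOn_rpow_mul_intervalIntegral (hint c hc) (hint c hc)).mul_const _)
      measurableSet_Ioi fun w (hw : 0 < w) => ?_
    rw [hcc, mul_assoc, mul_assoc]
    exact mul_le_mul_of_nonneg_left
      (intervalIntegral_mul_rpow_mul_integral_le_of_concaveOn_log hf_cont hf_pos hlog hw ha hb)
      (rpow_nonneg hw.le _)
  have hΓ : ∀ {p : ℝ}, -1 < p → 0 < Gamma (p + 1) := fun hp => Gamma_pos_of_pos (by linarith)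
  rw [integral_rpow_mul_one_sub_rpow hc hc, integral_rpow_mul_one_sub_rpow ha hb,
    show c + c + 2 = a + b + 2 by rw [hcc], ← mul_div_assoc, ← mul_div_assoc,
    div_le_div_iff_of_pos_right (Gamma_pos_of_pos (by linarith))] at key
  rw [normalizedMoment, normalizedMoment, normalizedMoment, div_mul_div_comm, div_pow,
    div_le_div_iff₀ (mul_pos (hΓ ha) (hΓ hb)) (pow_pos (hΓ hc) 2)]
  linarith

theorem concaveOn_log_normalizedMoment :
    ConcaveOn ℝ (Ioi (-1)) fun β => log (normalizedMoment f β) := by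
  have hpos : ∀ β ∈ Ioi (-1 : ℝ), 0 < normalizedMoment f β := fun β hβ =>
    normalizedMoment_pos hf_pos (hint β hβ) hβ
  refine concaveOn_of_midpoint (convex_Ioi _) (ContinuousOn.log ?_ fun β hβ => (hpos β hβ).ne')
    fun a (ha : (-1 : ℝ) < a) b (hb : (-1 : ℝ) < b) => ?_
  · have hΓ : ContinuousOn (fun β : ℝ => Gamma (β + 1)) (Ioi (-1)) :=
      continuousOn_Gamma_Ioi.comp (continuous_add_const 1).continuousOn
        fun β (hβ : (-1 : ℝ) < β) => show (0 : ℝ) < β + 1 by linarith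
    exact (continuousOn_setIntegral_mul_rpow hint).div hΓ
      fun β (hβ : (-1 : ℝ) < β) => (Gamma_pos_of_pos (by linarith)).ne'
  · rw [midpoint_eq_smul_add, smul_eq_mul, invOf_eq_inv, inv_mul_eq_div,
      ← log_mul (hpos a ha).ne' (hpos b hb).ne',
      ← log_rpow (hpos _ (by linarith : -1 < (a + b) / 2))]
    refine log_le_log (mul_pos (hpos a ha) (hpos b hb)) ?_
    exact_mod_cast normalizedMoment_mul_le_sq hf_cont hf_pos hlog hint ha hb

end LogConcave

theorem rpow_mul_rpow_le_of_concaveOn_log {s : Set ℝ} {F : ℝ → ℝ} (hF : ∀ x ∈ s, 0 < F x)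
    (hlog : ConcaveOn ℝ s fun x => log (F x)) {x y l : ℝ} (hx : x ∈ s) (hy : y ∈ s)
    (hl : l ∈ Icc (0 : ℝ) 1) :
    F x ^ l * F y ^ (1 - l) ≤ F (l * x + (1 - l) * y) := by
  have hxy := hlog.1 hx hy hl.1 (sub_nonneg.2 hl.2) (add_sub_cancel l 1)
  simp only [smul_eq_mul] at hxy
  rw [rpow_def_of_pos (hF x hx), rpow_def_of_pos (hF y hy), ← exp_add,
    ← exp_log (hF _ hxy)]
  refine exp_le_exp.2 ?_
  have := hlog.2 hx hy hl.1 (sub_nonneg.2 hl.2) (add_sub_cancel l 1)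
  simp only [smul_eq_mul] at this
  linarith

theorem exp_neg_two_mul_mul_rpow_le_Gamma {N y : ℝ} (hN : 1 ≤ N) (hy : 1 ≤ y) :
    exp (-(2 * N)) * N ^ y ≤ Gamma y := by
  have hN0 : 0 < N := by linarith
  have hint := GammaIntegral_convergent (by linarith : 0 < y)
  rw [Gamma_eq_integral (by linarith)]
  calc exp (-(2 * N)) * N ^ y
      = exp (-(2 * N)) * N ^ (y - 1) * (volume (Ioc N (2 * N))).toReal := by
        rw [volume_Ioc, ENNReal.toReal_ofReal (by linarith), mul_assoc, two_mul,
          add_sub_cancel_right, ← rpow_add_one hN0.ne', sub_add_cancel]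
    _ ≤ ∫ t in Ioc N (2 * N), exp (-t) * t ^ (y - 1) :=
        setIntegral_ge_of_const_le_real measurableSet_Ioc (by simp) (fun t ht =>
          mul_le_mul (exp_le_exp.2 (by linarith [ht.2])) (rpow_le_rpow hN0.le ht.1.le (by linarith))
            (rpow_nonneg hN0.le _) (exp_pos _).le)
          (hint.mono_set fun t ht => hN0.trans ht.1)
    _ ≤ ∫ t in Ioi 0, exp (-t) * t ^ (y - 1) :=
        setIntegral_mono_set hint ((ae_restrict_iff' measurableSet_Ioi).2
          (Eventually.of_forall fun t (ht : 0 < t) =>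
            mul_nonneg (exp_pos _).le (rpow_nonneg ht.le _)))
          (Eventually.of_forall fun t ht => hN0.trans ht.1)

noncomputable def volterraWeight (x α t : ℝ) : ℝ := x ^ (t + α) / Gamma (t + α + 1)

theorem volterraMu_eq_normalizedMoment (x β α : ℝ) :
    volterraMu x β α = normalizedMoment (volterraWeight x α) β := by
  rw [volterraMu, normalizedMoment, ← integral_div]
  congr 1 with t
  rw [volterraWeight]
  ring

section VolterraWeight

variable {x α : ℝ} (hx : 0 < x) (hα : -1 < α)
include hx hα

theorem volterraWeight_pos {t : ℝ} (ht : 0 ≤ t) : 0 < volterraWeight x α t :=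
  div_pos (rpow_pos_of_pos hx _) (Gamma_pos_of_pos (by linarith))

theorem continuousOn_volterraWeight : ContinuousOn (volterraWeight x α) (Ici 0) := by
  have hΓ : ContinuousOn (fun t => Gamma (t + α + 1)) (Ici 0) :=
    continuousOn_Gamma_Ioi.comp (by fun_prop : Continuous fun t : ℝ => t + α + 1).continuousOn
      fun t (ht : 0 ≤ t) => show 0 < t + α + 1 by linarith
  exact ((continuous_const_rpow hx.ne').comp (continuous_add_const α)).continuousOn.div hΓ
    fun t (ht : 0 ≤ t) => (Gamma_pos_of_pos (by linarith)).ne'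

theorem concaveOn_log_volterraWeight :
    ConcaveOn ℝ (Ioi 0) fun t => log (volterraWeight x α t) := by
  have haff : ConcaveOn ℝ (Ioi 0) fun t => (t + α) * log x :=
    ⟨convex_Ioi 0, fun _ _ _ _ a b _ _ hab => le_of_eq (by
      simp only [smul_eq_mul]; linear_combination (α * log x) * hab)⟩
  have hconv : ConvexOn ℝ (Ioi 0) fun t => log (Gamma (t + α + 1)) := by
    have := (convexOn_log_Gamma.translate_left (α + 1)).subset (s := Ioi 0)
      (fun t ht => show 0 < α + 1 + t by linarith [mem_Ioi.1 ht]) (convex_Ioi 0)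
    simpa only [Function.comp_def, add_assoc] using this
  refine (haff.sub hconv).congr fun t (ht : 0 < t) => ?_
  rw [Pi.sub_apply, volterraWeight, log_div (rpow_pos_of_pos hx _).ne'
    (Gamma_pos_of_pos (by linarith)).ne', log_rpow hx]

theorem volterraWeight_isBigO_exp_neg :
    volterraWeight x α =O[atTop] fun t => exp (-1 * t) := by
  -- `Γ(t + α + 1) ≥ exp (c (t + α + 1) - 2 exp c)` beats `x ^ t = exp (t log x)` as `c > log x`
  set c := |log x| + 1
  have hN : 1 ≤ exp c := one_le_exp (by positivity)
  refine Asymptotics.IsBigO.of_bound (exp (α * log x + 2 * exp c - c * (α + 1))) ?_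
  filter_upwards [eventually_ge_atTop 1] with t ht
  have hΓ := exp_neg_two_mul_mul_rpow_le_Gamma hN (by linarith : 1 ≤ t + α + 1)
  rw [norm_of_nonneg (volterraWeight_pos hx hα (by linarith)).le, norm_of_nonneg (exp_pos _).le,
    volterraWeight, div_le_iff₀ (Gamma_pos_of_pos (by linarith))]
  refine le_trans ?_ (mul_le_mul_of_nonneg_left hΓ (by positivity))
  rw [rpow_def_of_pos hx, rpow_def_of_pos (exp_pos c), log_exp, ← exp_add, ← exp_add, ← exp_add]
  refine exp_le_exp.2 ?_
  nlinarith [mul_le_mul_of_nonneg_left (le_abs_self (log x)) (by linarith : (0 : ℝ) ≤ t)]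

theorem integrableOn_volterraWeight_mul_rpow {β : ℝ} (hβ : -1 < β) :
    IntegrableOn (fun t => volterraWeight x α t * t ^ β) (Ioi 0) := by
  have h := mellin_convergent_of_isBigO_scalar (s := β + 1)
    ((continuousOn_volterraWeight hx hα).mono Ioi_subset_Ici_self |>.locallyIntegrableOn
      measurableSet_Ioi)
    ((volterraWeight_isBigO_exp_neg hx hα).trans
      (isLittleO_exp_neg_mul_rpow_atTop one_pos _).isBigO) (lt_add_one _) ?_
    (by linarith : (0 : ℝ) < β + 1)
  · simpa only [add_sub_cancel_right, mul_comm] using h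
  · have h0 := ((continuousOn_volterraWeight hx hα) 0 self_mem_Ici).tendsto.mono_left
      (nhdsWithin_mono _ Ioi_subset_Ici_self)
    simpa only [neg_zero, rpow_zero] using h0.isBigO_one ℝ

end VolterraWeight

/-- For fixed `x > 0` and `α > -1`, `β ↦ μ(x, β, α)` is log-concave on `(-1, ∞)`. -/
theorem volterraMu_logConcave_in_beta (x α : ℝ) (hx : 0 < x) (hα : -1 < α) :
    ∀ β₁ β₂ : ℝ, -1 < β₁ → -1 < β₂ → ∀ l : ℝ, l ∈ Set.Icc (0 : ℝ) 1 →
      volterraMu x β₁ α ^ l * volterraMu x β₂ α ^ (1 - l) ≤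
        volterraMu x (l * β₁ + (1 - l) * β₂) α := by
  intro β₁ β₂ hβ₁ hβ₂ l hl
  have hint : ∀ β : ℝ, -1 < β → IntegrableOn (fun t => volterraWeight x α t * t ^ β) (Ioi 0) :=
    fun β => integrableOn_volterraWeight_mul_rpow hx hα
  have hpos : ∀ t, 0 < t → 0 < volterraWeight x α t := fun t ht => volterraWeight_pos hx hα ht.le
  simp only [volterraMu_eq_normalizedMoment]
  exact rpow_mul_rpow_le_of_concaveOn_log (fun β hβ => normalizedMoment_pos hpos (hint β hβ) hβ)
    (concaveOn_log_normalizedMoment (continuousOn_volterraWeight hx hα) hpos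
      (concaveOn_log_volterraWeight hx hα) hint) hβ₁ hβ₂ hl
end

section
/- For all x, y > 0, α ≥ 0 and β > -1, one has μ(√(xy), β, α) ≤ √(μ(x, β, α) · μ(y, β, α)). -/
open MeasureTheory Real Set

/-! The integrand at `√(x y)` is the geometric mean of the integrands at `x` and `y`, because
`√(x y) ^ s = √(x ^ s * y ^ s)`, so the inequality is Cauchy–Schwarz applied to the square roots
of the two integrands. The analytic input is their integrability: comparing `Γ(s + 1)` with its
integral over `(e x, ∞)` gives `x ^ s ≤ exp (e x - s) Γ(s + 1)` for `s ≥ 0`, which dominates the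
integrand by a multiple of the Gamma integrand `exp (-t) t ^ β`. -/

theorem integral_sqrt_mul_le_sqrt_mul_integral {Ω : Type*} [MeasurableSpace Ω] {μ : Measure Ω}
    {f g : Ω → ℝ} (hf₀ : 0 ≤ᵐ[μ] f) (hg₀ : 0 ≤ᵐ[μ] g) (hf : Integrable f μ)
    (hg : Integrable g μ) :
    ∫ a, √(f a * g a) ∂μ ≤ √((∫ a, f a ∂μ) * ∫ a, g a ∂μ) := by
  have sqrt_sq_ae : ∀ {h : Ω → ℝ}, 0 ≤ᵐ[μ] h → (fun a ↦ √(h a) ^ 2) =ᵐ[μ] h :=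
    fun hh₀ ↦ hh₀.mono fun a ha ↦ sq_sqrt ha
  have memLp_sqrt : ∀ {h : Ω → ℝ}, 0 ≤ᵐ[μ] h → Integrable h μ →
      MemLp (fun a ↦ √(h a)) (ENNReal.ofReal 2) μ := fun hh₀ hh ↦ by
    rw [ENNReal.ofReal_ofNat, memLp_two_iff_integrable_sq
      (continuous_sqrt.comp_aestronglyMeasurable hh.1)]
    exact hh.congr (sqrt_sq_ae hh₀).symm
  have holder := integral_mul_le_Lp_mul_Lq_of_nonneg HolderConjugate.two_two
    (.of_forall fun a ↦ sqrt_nonneg (f a)) (.of_forall fun a ↦ sqrt_nonneg (g a))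
    (memLp_sqrt hf₀ hf) (memLp_sqrt hg₀ hg)
  simp only [rpow_two] at holder
  rw [integral_congr_ae (sqrt_sq_ae hf₀), integral_congr_ae (sqrt_sq_ae hg₀),
    ← sqrt_eq_rpow, ← sqrt_eq_rpow, ← sqrt_mul (integral_nonneg_of_ae hf₀)] at holder
  calc ∫ a, √(f a * g a) ∂μ = ∫ a, √(f a) * √(g a) ∂μ :=
        integral_congr_ae (hf₀.mono fun a ha ↦ sqrt_mul ha _)
    _ ≤ _ := holder

namespace Real

theorem rpow_mul_exp_neg_le_Gamma_add_one {x s : ℝ} (hx : 0 ≤ x) (hs : 0 ≤ s) :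
    x ^ s * exp (-x) ≤ Gamma (s + 1) := by
  have hΓ : IntegrableOn (fun u ↦ exp (-u) * u ^ s) (Ioi 0) := by
    simpa using GammaIntegral_convergent (s := s + 1) (by linarith)
  rw [Gamma_eq_integral (by linarith), add_sub_cancel_right, ← integral_exp_neg_Ioi,
    ← integral_const_mul]
  calc ∫ u in Ioi x, x ^ s * exp (-u)
      ≤ ∫ u in Ioi x, exp (-u) * u ^ s := by
        refine setIntegral_mono_on ((integrableOn_exp_neg_Ioi x).const_mul _)
          (hΓ.mono_set (Ioi_subset_Ioi hx)) measurableSet_Ioi fun u hu ↦ ?_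
        rw [mul_comm]
        exact mul_le_mul_of_nonneg_left (rpow_le_rpow hx (le_of_lt hu) hs) (exp_pos _).le
    _ ≤ ∫ u in Ioi 0, exp (-u) * u ^ s :=
        setIntegral_mono_set hΓ
          ((ae_restrict_mem measurableSet_Ioi).mono fun u (hu : 0 < u) ↦ by positivity)
          (Ioi_subset_Ioi hx).eventuallyLE

theorem rpow_div_Gamma_add_one_le {x s : ℝ} (hx : 0 ≤ x) (hs : 0 ≤ s) :
    x ^ s / Gamma (s + 1) ≤ exp (exp 1 * x - s) := by
  have h := rpow_mul_exp_neg_le_Gamma_add_one (mul_nonneg (exp_pos 1).le hx) hs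
  rw [mul_rpow (exp_pos 1).le hx, exp_one_rpow] at h
  rw [div_le_iff₀ (Gamma_pos_of_pos (by linarith))]
  calc x ^ s = exp (exp 1 * x - s) * (exp s * x ^ s * exp (-(exp 1 * x))) := by
        rw [exp_sub, exp_neg]; field_simp
    _ ≤ exp (exp 1 * x - s) * Gamma (s + 1) := by gcongr

end Real

noncomputable def volterraIntegrand (x β α t : ℝ) : ℝ :=
  x ^ (t + α) * t ^ β / (Gamma (t + α + 1) * Gamma (β + 1))

section

variable {x y α β t : ℝ}

theorem volterraIntegrand_nonneg (hx : 0 ≤ x) (ht : 0 < t) (hα : -1 < α) (hβ : -1 < β) :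
    0 ≤ volterraIntegrand x β α t := by
  have := Gamma_pos_of_pos (show 0 < t + α + 1 by linarith)
  have := Gamma_pos_of_pos (show 0 < β + 1 by linarith)
  unfold volterraIntegrand
  positivity

theorem volterraIntegrand_sqrt_mul (hx : 0 ≤ x) (hy : 0 ≤ y) (ht : 0 < t) (hα : -1 < α)
    (hβ : -1 < β) :
    volterraIntegrand √(x * y) β α t =
      √(volterraIntegrand x β α t * volterraIntegrand y β α t) := by
  have hΓ := Gamma_pos_of_pos (show 0 < t + α + 1 by linarith)
  have := Gamma_pos_of_pos (show 0 < β + 1 by linarith)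
  set k := t ^ β / (Gamma (t + α + 1) * Gamma (β + 1))
  have hk : 0 ≤ k := by positivity
  have hpow : (√(x * y) ^ (t + α)) ^ 2 = x ^ (t + α) * y ^ (t + α) := by
    rw [rpow_pow_comm (sqrt_nonneg _), sq_sqrt (mul_nonneg hx hy), mul_rpow hx hy]
  have hprod : volterraIntegrand x β α t * volterraIntegrand y β α t =
      (√(x * y) ^ (t + α) * k) ^ 2 := by
    simp only [volterraIntegrand, mul_div_assoc]
    rw [mul_pow, hpow]; ring
  rw [hprod, sqrt_sq (by positivity), volterraIntegrand, mul_div_assoc]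

theorem continuousOn_volterraIntegrand (hx : 0 < x) (hα : -1 < α) (hβ : -1 < β) :
    ContinuousOn (volterraIntegrand x β α) (Ioi 0) := by
  intro t (ht : 0 < t)
  have hΓ : ContinuousAt (fun t ↦ Gamma (t + α + 1)) t :=
    ((convexOn_Gamma.continuousOn isOpen_Ioi).continuousAt
      (isOpen_Ioi.mem_nhds (show 0 < t + α + 1 by linarith))).comp
        (f := fun t ↦ t + α + 1) (by fun_prop)
  refine ContinuousAt.continuousWithinAt (((continuousAt_const_rpow hx.ne').comp
    (by fun_prop)).mul (continuousAt_rpow_const t β (.inl ht.ne')) |>.div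
      (hΓ.mul continuousAt_const) ?_)
  exact (mul_pos (Gamma_pos_of_pos (by linarith)) (Gamma_pos_of_pos (by linarith))).ne'

theorem volterraIntegrand_le (hx : 0 < x) (ht : 0 < t) (hα : 0 ≤ α) (hβ : -1 < β) :
    volterraIntegrand x β α t ≤
      exp (exp 1 * x - α) / Gamma (β + 1) * (exp (-t) * t ^ β) := by
  have := Gamma_pos_of_pos (show 0 < t + α + 1 by linarith)
  have := Gamma_pos_of_pos (show 0 < β + 1 by linarith)
  have hbound := rpow_div_Gamma_add_one_le hx.le (show 0 ≤ t + α by linarith)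
  calc volterraIntegrand x β α t
      = x ^ (t + α) / Gamma (t + α + 1) * (t ^ β / Gamma (β + 1)) := by
        rw [volterraIntegrand]; field_simp
    _ ≤ exp (exp 1 * x - (t + α)) * (t ^ β / Gamma (β + 1)) := by gcongr
    _ = _ := by
        rw [show exp 1 * x - (t + α) = (exp 1 * x - α) + -t by ring, exp_add]
        ring

theorem integrableOn_volterraIntegrand (hx : 0 < x) (hα : 0 ≤ α) (hβ : -1 < β) :
    IntegrableOn (volterraIntegrand x β α) (Ioi 0) := by
  have hΓ : IntegrableOn (fun t ↦ exp (-t) * t ^ β) (Ioi 0) := by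
    simpa using GammaIntegral_convergent (s := β + 1) (by linarith)
  exact Integrable.mono' (hΓ.const_mul _)
    ((continuousOn_volterraIntegrand hx (by linarith) hβ).aestronglyMeasurable
      measurableSet_Ioi)
    ((ae_restrict_mem measurableSet_Ioi).mono fun t (ht : 0 < t) ↦ by
      rw [norm_of_nonneg (volterraIntegrand_nonneg hx.le ht (by linarith) hβ)]
      exact volterraIntegrand_le hx ht hα hβ)

end

/-- For all `x, y > 0`, `α ≥ 0` and `β > -1`,
`μ(√(xy), β, α) ≤ √(μ(x, β, α) μ(y, β, α))`. -/
theorem volterraMu_sqrt_inequality (x y α β : ℝ) (hx : 0 < x) (hy : 0 < y)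
    (hα : 0 ≤ α) (hβ : -1 < β) :
    volterraMu (Real.sqrt (x * y)) β α ≤
      Real.sqrt (volterraMu x β α * volterraMu y β α) := by
  have hα' : -1 < α := by linarith
  have hnonneg : ∀ z, 0 < z → 0 ≤ᵐ[volume.restrict (Ioi 0)] volterraIntegrand z β α :=
    fun z hz ↦ (ae_restrict_mem measurableSet_Ioi).mono fun t ht ↦
      volterraIntegrand_nonneg hz.le ht hα' hβ
  calc volterraMu √(x * y) β α
      = ∫ t in Ioi 0, √(volterraIntegrand x β α t * volterraIntegrand y β α t) :=
        setIntegral_congr_fun measurableSet_Ioi fun t ht ↦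
          volterraIntegrand_sqrt_mul hx.le hy.le ht hα' hβ
    _ ≤ √(volterraMu x β α * volterraMu y β α) :=
        integral_sqrt_mul_le_sqrt_mul_integral (hnonneg x hx) (hnonneg y hy)
          (integrableOn_volterraIntegrand hx hα hβ) (integrableOn_volterraIntegrand hy hα hβ)
end

section
/- Let f(x) = ∫₀^∞ e^(-x t) / (t ((log t)² + π²)) dt for x > 0. Then for all x, y > 0 one has f(x) · f(y) ≤ f(x + y). (Equivalently, writing f(x) = e^(-x) − ν(−x), this reads ν(−x)ν(−y) + ν(−x−y) ≤ e^(-x) ν(−y) + e^(-y) ν(−x).) -/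
/-!
Substituting `t = exp u` turns the weight `dt / (t ((log t)² + π²))` into `du / (u² + π²)`,
the Cauchy distribution of scale `π`; hence `f x` is the expectation of `exp (-x * exp U)` for
a Cauchy variable `U`. For `x, y ≥ 0` the functions `u ↦ exp (-x * exp u)` and
`u ↦ exp (-y * exp u)` are both decreasing, so by Chebyshev's integral inequality their
covariance is nonnegative, and the expectation of their product is `f (x + y)`.
-/

open MeasureTheory Real Set

/-- The function `f(x) = ∫₀^∞ e^(-x t) / (t ((log t)² + π²)) dt` (which equals
`e^(-x) − ν(−x)` by Ramanujan's identity). -/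
noncomputable def ramanujanF (x : ℝ) : ℝ :=
  ∫ t in Set.Ioi (0 : ℝ),
    Real.exp (-x * t) / (t * ((Real.log t) ^ 2 + Real.pi ^ 2))

open ProbabilityTheory
open scoped NNReal

theorem integral_mul_integral_le_integral_mul_of_monovary {α : Type*} [MeasurableSpace α]
    {μ : Measure α} [IsProbabilityMeasure μ] {f g : α → ℝ} (hfg : Monovary f g)
    (hf : Integrable f μ) (hg : Integrable g μ) (hfg' : Integrable (fun a ↦ f a * g a) μ) :
    (∫ a, f a ∂μ) * ∫ a, g a ∂μ ≤ ∫ a, f a * g a ∂μ := by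
  -- integrate the rearrangement inequality `f s g t + f t g s ≤ f s g s + f t g t` over `μ × μ`
  have hrearr := integral_mono (μ := μ.prod μ) ((hf.mul_prod hg).add (hg.mul_prod hf))
    ((hfg'.comp_fst μ).add (hfg'.comp_snd μ)) fun p ↦ by
      simpa only [Pi.add_apply, mul_comm (g p.1)] using hfg.mul_add_mul_le_mul_add_mul p.1 p.2
  rw [integral_add' (hf.mul_prod hg) (hg.mul_prod hf),
    integral_add' (hfg'.comp_fst μ) (hfg'.comp_snd μ), integral_prod_mul, integral_prod_mul,
    integral_fun_fst (fun a ↦ f a * g a), integral_fun_snd (fun a ↦ f a * g a), probReal_univ,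
    one_smul] at hrearr
  linarith

theorem integral_cauchyMeasure_eq_integral_mul (x₀ : ℝ) {γ : ℝ≥0} (hγ : γ ≠ 0) (g : ℝ → ℝ) :
    ∫ u, g u ∂cauchyMeasure x₀ γ = ∫ u, cauchyPDFReal x₀ γ u * g u := by
  rw [cauchyMeasure_of_scale_ne_zero x₀ hγ, integral_withDensity_eq_integral_toReal_smul
    (measurable_cauchyPDF x₀ γ) (ae_of_all _ fun _ ↦ ENNReal.ofReal_lt_top)]
  simp only [cauchyPDF, ENNReal.toReal_ofReal (cauchyPDF_pos x₀ hγ _).le, smul_eq_mul]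

theorem integral_Ioi_zero_eq_integral_comp_exp (G : ℝ → ℝ) :
    ∫ t in Ioi 0, G t = ∫ u, exp u * G (exp u) := by
  simpa [abs_of_pos (exp_pos _)] using integral_image_eq_integral_abs_deriv_smul
    MeasurableSet.univ (fun u _ ↦ (hasDerivAt_exp u).hasDerivWithinAt) exp_injective.injOn G

theorem ramanujanF_eq_integral_cauchyMeasure (x : ℝ) :
    ramanujanF x = ∫ u, exp (-x * exp u) ∂cauchyMeasure 0 NNReal.pi := by
  rw [integral_cauchyMeasure_eq_integral_mul 0 NNReal.pi_ne_zero, ramanujanF,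
    integral_Ioi_zero_eq_integral_comp_exp]
  refine integral_congr_ae (ae_of_all _ fun u ↦ ?_)
  simp only [cauchyPDFReal_def, NNReal.coe_real_pi, log_exp, sub_zero]
  field_simp

theorem antitone_exp_neg_mul_exp {x : ℝ} (hx : 0 ≤ x) : Antitone fun u ↦ exp (-x * exp u) :=
  fun _ _ h ↦ exp_le_exp.2 <| by nlinarith [exp_le_exp.2 h]

theorem integrable_exp_neg_mul_exp {μ : Measure ℝ} [IsFiniteMeasure μ] {x : ℝ} (hx : 0 ≤ x) :
    Integrable (fun u ↦ exp (-x * exp u)) μ := by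
  refine Integrable.of_bound (by fun_prop) 1 (ae_of_all _ fun u ↦ ?_)
  rw [norm_of_nonneg (exp_pos _).le, exp_le_one_iff]
  nlinarith [exp_pos u]

/-- For all `x, y > 0`, `f(x) f(y) ≤ f(x + y)`. -/
theorem ramanujanF_supermultiplicative (x y : ℝ) (hx : 0 < x) (hy : 0 < y) :
    ramanujanF x * ramanujanF y ≤ ramanujanF (x + y) := by
  have hmul (u : ℝ) : exp (-x * exp u) * exp (-y * exp u) = exp (-(x + y) * exp u) := by
    rw [← exp_add]; ring_nf
  simp only [ramanujanF_eq_integral_cauchyMeasure, ← hmul]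
  exact integral_mul_integral_le_integral_mul_of_monovary
    ((antitone_exp_neg_mul_exp hx.le).monovary (antitone_exp_neg_mul_exp hy.le))
    (integrable_exp_neg_mul_exp hx.le) (integrable_exp_neg_mul_exp hy.le)
    (by simpa only [hmul] using integrable_exp_neg_mul_exp (add_pos hx hy).le)
end

section
/- Let x > 0, α > -1 and β > -1, and for each integer k ≥ 0 set I_k(β) = ∫₀^∞ x^(t+α) t^β (log t)^k / Γ(t+α+1) dt (the k-th derivative with respect of β of Γ(β+1)μ(x,β,α)). Then for every odd integer n ≥ 1, the Turán-type inequality I_{n-1}(β) · I_{n+1}(β) − I_n(β)² ≥ 0 holds. -/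
/-!
For `n = 2m + 1` the three integrals are moments `∫ w Lᵏ` of the positive weight
`w(t) = x^(t+α) t^β / Γ(t+α+1)` on `(0, ∞)` with `L = log t`, so the inequality is the
Cauchy–Schwarz inequality for `L^m` and `L^(m+1)` in `L²(w)`: the quadratic
`s ↦ ∫ w (L^m + s L^(m+1))²` is nonnegative, hence has nonpositive discriminant.
All moments are finite: near `0`, `|log t|ᵏ` costs only a small power of `t`, which
`t^β` with `β > -1` can afford; near `∞`, the bound `Γ(s) ≥ a^(s-1) e^(-a)` (for `s ≥ 1` and
every `a > 0`, from the part `(a, ∞)` of the Gamma integral) makes `x^t / Γ(t + c)` decay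
faster than any exponential.
-/

open MeasureTheory Real Set

/-- `I_k(β) = ∫₀^∞ x^(t+α) t^β (log t)^k / Γ(t+α+1) dt`, the `k`-th derivative with
respect to `β` of `Γ(β+1) μ(x, β, α)`. -/
noncomputable def volterraI (x α : ℝ) (k : ℕ) (β : ℝ) : ℝ :=
  ∫ t in Set.Ioi (0 : ℝ),
    x ^ (t + α) * t ^ β * (Real.log t) ^ k / Real.Gamma (t + α + 1)

open Filter Asymptotics

theorem sq_integral_weight_mul_le {X : Type*} [MeasurableSpace X] {μ : Measure X}
    {w u v : X → ℝ} (hw : 0 ≤ᵐ[μ] w) (huu : Integrable (fun a => w a * u a ^ 2) μ)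
    (huv : Integrable (fun a => w a * (u a * v a)) μ)
    (hvv : Integrable (fun a => w a * v a ^ 2) μ) :
    (∫ a, w a * (u a * v a) ∂μ) ^ 2 ≤ (∫ a, w a * u a ^ 2 ∂μ) * ∫ a, w a * v a ^ 2 ∂μ := by
  have hquad : ∀ s : ℝ, 0 ≤ (∫ a, w a * v a ^ 2 ∂μ) * (s * s)
      + 2 * (∫ a, w a * (u a * v a) ∂μ) * s + ∫ a, w a * u a ^ 2 ∂μ := fun s => calc
    0 ≤ ∫ a, w a * (u a + s * v a) ^ 2 ∂μ :=
      integral_nonneg_of_ae (hw.mono fun a ha => mul_nonneg ha (sq_nonneg _))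
    _ = ∫ a, (w a * v a ^ 2 * (s * s) + w a * (u a * v a) * (2 * s) + w a * u a ^ 2) ∂μ := by
      congr 1 with a; ring
    _ = _ := by
      rw [integral_add (by fun_prop) huu, integral_add (hvv.mul_const _) (huv.mul_const _),
        integral_mul_const, integral_mul_const]
      ring
  have hdisc := discrim_le_zero hquad
  rw [discrim] at hdisc
  linarith

theorem sq_integral_mul_pow_odd_le {X : Type*} [MeasurableSpace X] {μ : Measure X}
    {w L : X → ℝ} (hw : 0 ≤ᵐ[μ] w) (hint : ∀ k : ℕ, Integrable (fun a => w a * L a ^ k) μ)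
    (m : ℕ) :
    (∫ a, w a * L a ^ (2 * m + 1) ∂μ) ^ 2 ≤
      (∫ a, w a * L a ^ (2 * m) ∂μ) * ∫ a, w a * L a ^ (2 * m + 2) ∂μ := by
  have hsq : ∀ j a, (L a ^ j) ^ 2 = L a ^ (2 * j) := fun j a => by ring
  have hmul : ∀ a, L a ^ m * L a ^ (m + 1) = L a ^ (2 * m + 1) := fun a => by ring
  rw [show 2 * m + 2 = 2 * (m + 1) by ring]
  simpa only [hsq, hmul] using sq_integral_weight_mul_le hw
    (u := fun a => L a ^ m) (v := fun a => L a ^ (m + 1))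
    (by simpa only [hsq] using hint _) (by simpa only [hmul] using hint _)
    (by simpa only [hsq] using hint _)

theorem rpow_mul_exp_neg_le_Gamma {a s : ℝ} (ha : 0 < a) (hs : 1 ≤ s) :
    a ^ (s - 1) * exp (-a) ≤ Gamma s := by
  have hint := GammaIntegral_convergent (by linarith : 0 < s)
  rw [Gamma_eq_integral (by linarith), ← integral_exp_neg_Ioi, ← integral_const_mul]
  calc ∫ t in Ioi a, a ^ (s - 1) * exp (-t)
      ≤ ∫ t in Ioi a, exp (-t) * t ^ (s - 1) := by
        refine setIntegral_mono_on ((integrableOn_exp_neg_Ioi a).const_mul _)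
          (hint.mono_set (Ioi_subset_Ioi ha.le)) measurableSet_Ioi fun t ht => ?_
        rw [mul_comm]
        gcongr
        exact le_of_lt ht
    _ ≤ ∫ t in Ioi 0, exp (-t) * t ^ (s - 1) :=
        setIntegral_mono_set hint
          ((ae_restrict_mem measurableSet_Ioi).mono fun t ht =>
            mul_nonneg (exp_pos _).le (rpow_nonneg (le_of_lt ht) _))
          (Ioi_subset_Ioi ha.le).eventuallyLE

theorem isBigO_rpow_div_Gamma_add_atTop {x : ℝ} (hx : 0 < x) (b c : ℝ) :
    (fun t => x ^ t / Gamma (t + c)) =O[atTop] fun t => exp (-b * t) := by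
  set a := x * exp b with ha_def
  have ha : 0 < a := by positivity
  have hxa : x / a = exp (-b) := by rw [ha_def, exp_neg]; field_simp
  refine IsBigO.of_bound (a ^ (1 - c) * exp a) ?_
  filter_upwards [eventually_ge_atTop (1 - c)] with t ht
  have hΓ := rpow_mul_exp_neg_le_Gamma ha (by linarith : 1 ≤ t + c)
  have hpos : 0 < a ^ (t + c - 1) * exp (-a) := by positivity
  rw [norm_div, norm_of_nonneg (by positivity), norm_of_nonneg (hpos.le.trans hΓ),
    norm_of_nonneg (by positivity)]
  calc x ^ t / Gamma (t + c) ≤ x ^ t / (a ^ (t + c - 1) * exp (-a)) := by gcongr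
    _ = a ^ (1 - c) * exp a * (x / a) ^ t := by
        rw [div_rpow hx.le ha.le, show t + c - 1 = t - (1 - c) by ring, rpow_sub ha, exp_neg]
        field_simp
    _ = a ^ (1 - c) * exp a * exp (-b * t) := by rw [hxa, ← exp_mul]

theorem continuousOn_rpow_mul_log_pow (β : ℝ) (k : ℕ) :
    ContinuousOn (fun t : ℝ => t ^ β * log t ^ k) (Ioi 0) :=
  (continuousOn_id.rpow_const fun _ ht => Or.inl (ne_of_gt ht)).mul
    ((continuousOn_log.mono fun _ ht => ne_of_gt ht).pow k)

theorem integrableOn_Ioc_rpow_mul_log_pow {β : ℝ} (hβ : -1 < β) (k : ℕ) :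
    IntegrableOn (fun t : ℝ => t ^ β * log t ^ k) (Ioc 0 1) := by
  set δ := (β + 1) / (2 * (k + 1)) with hδ_def
  have hδ : 0 < δ := div_pos (by linarith) (by positivity)
  have hkδ : k * δ < β + 1 := by
    rw [hδ_def, mul_div_assoc', div_lt_iff₀ (by positivity)]
    nlinarith
  have hdom : IntegrableOn (fun t : ℝ => δ⁻¹ ^ k * t ^ (β - k * δ)) (Ioc 0 1) :=
    ((intervalIntegral.intervalIntegrable_rpow' (by linarith)).1).const_mul _
  refine hdom.mono' ((continuousOn_rpow_mul_log_pow β k).mono Ioc_subset_Ioi_self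
    |>.aestronglyMeasurable measurableSet_Ioc) ?_
  filter_upwards [ae_restrict_mem measurableSet_Ioc] with t ⟨ht0, ht1⟩
  have hlog : |log t * t ^ δ| ≤ δ⁻¹ := by
    simpa [one_div] using (abs_log_mul_self_rpow_lt t δ ht0 ht1 hδ).le
  calc ‖t ^ β * log t ^ k‖ = |log t * t ^ δ| ^ k * t ^ (β - k * δ) := by
        rw [norm_mul, norm_pow, norm_of_nonneg (rpow_nonneg ht0.le _), abs_mul,
          abs_of_pos (rpow_pos_of_pos ht0 _), mul_pow, ← rpow_natCast (t ^ δ), ← rpow_mul ht0.le,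
          Real.norm_eq_abs, mul_assoc, ← rpow_add ht0]
        ring_nf
    _ ≤ δ⁻¹ ^ k * t ^ (β - k * δ) := by gcongr

theorem continuousOn_rpow_div_Gamma {x α : ℝ} (hx : 0 < x) (hα : -1 < α) :
    ContinuousOn (fun t => x ^ (t + α) / Gamma (t + α + 1)) (Ici 0) := by
  intro t ht
  have hpos : 0 < t + α + 1 := by linarith [show (0 : ℝ) ≤ t from ht]
  have hΓ : DifferentiableAt ℝ Gamma (t + α + 1) := differentiableAt_Gamma fun m hm => by
    linarith [m.cast_nonneg (α := ℝ)]
  refine ContinuousAt.continuousWithinAt (ContinuousAt.div ?_ ?_ (Gamma_pos_of_pos hpos).ne')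
  · exact (continuous_const.rpow (by fun_prop) fun _ => Or.inl hx.ne').continuousAt
  · exact hΓ.continuousAt.comp (f := fun t => t + α + 1) (by fun_prop)

theorem integrableOn_volterraI_integrand {x α β : ℝ} (hx : 0 < x) (hα : -1 < α)
    (hβ : -1 < β) (k : ℕ) :
    IntegrableOn (fun t => x ^ (t + α) * t ^ β * log t ^ k / Gamma (t + α + 1)) (Ioi 0) := by
  set G := fun t => x ^ (t + α) / Gamma (t + α + 1) with hG_def
  have hG : ContinuousOn G (Ici 0) := continuousOn_rpow_div_Gamma hx hα
  have hsplit : (fun t => x ^ (t + α) * t ^ β * log t ^ k / Gamma (t + α + 1)) =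
      fun t => G t * (t ^ β * log t ^ k) := by
    ext t; rw [hG_def]; ring
  rw [hsplit, ← Ioc_union_Ioi_eq_Ioi zero_le_one]
  refine IntegrableOn.union ?_ ?_
  · have hGc := hG.mono (Icc_subset_Ici_self : Icc (0 : ℝ) 1 ⊆ Ici 0)
    obtain ⟨C, hC⟩ := isCompact_Icc.exists_bound_of_continuousOn hGc
    exact (integrableOn_Ioc_rpow_mul_log_pow hβ k).bdd_mul
      ((hGc.mono Ioc_subset_Icc_self).aestronglyMeasurable measurableSet_Ioc)
      ((ae_restrict_mem measurableSet_Ioc).mono fun t ht => hC t (Ioc_subset_Icc_self ht))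
  · refine integrable_of_isBigO_exp_neg one_pos ((hG.mono (Ici_subset_Ici.2 zero_le_one)).mul
      ((continuousOn_rpow_mul_log_pow β k).mono (Ici_subset_Ioi.2 zero_lt_one))) ?_
    have hGO : G =O[atTop] fun t => exp (-2 * t) := by
      refine ((isBigO_rpow_div_Gamma_add_atTop hx 2 (α + 1)).const_mul_left (x ^ α)).congr_left
        fun t => ?_
      simp only [hG_def, rpow_add hx, ← add_assoc]
      ring
    have hPO : (fun t : ℝ => t ^ β * log t ^ k) =O[atTop] exp := by
      refine IsBigO.trans ?_ (isLittleO_rpow_exp_atTop (β + k)).isBigO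
      refine IsBigO.of_bound 1 ?_
      filter_upwards [eventually_ge_atTop 1] with t ht
      have ht0 : 0 < t := zero_lt_one.trans_le ht
      rw [one_mul, norm_mul, norm_pow, norm_of_nonneg (rpow_nonneg ht0.le _),
        norm_of_nonneg (log_nonneg ht), norm_of_nonneg (rpow_nonneg ht0.le _),
        rpow_add ht0, rpow_natCast]
      gcongr
      · exact log_nonneg ht
      · exact log_le_self ht0.le
    refine (hGO.mul hPO).congr_right fun t => ?_
    rw [← exp_add]
    ring_nf

theorem volterraI_turan_general (x α β : ℝ) (hx : 0 < x) (hα : -1 < α) (hβ : -1 < β)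
    (n : ℕ) (hn : Odd n) :
    0 ≤ volterraI x α (n - 1) β * volterraI x α (n + 1) β -
      volterraI x α n β ^ 2 := by
  obtain ⟨m, rfl⟩ := hn
  set w := fun t => x ^ (t + α) * t ^ β / Gamma (t + α + 1) with hw_def
  have hI : ∀ k, volterraI x α k β = ∫ t in Ioi 0, w t * log t ^ k := fun k => by
    simp only [volterraI, hw_def]
    congr 1 with t
    ring
  have hint : ∀ k : ℕ, IntegrableOn (fun t => w t * log t ^ k) (Ioi 0) := fun k =>
    (integrableOn_volterraI_integrand hx hα hβ k).congr_fun
      (fun t _ => by simp only [hw_def]; ring) measurableSet_Ioi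
  have hw : 0 ≤ᵐ[volume.restrict (Ioi 0)] w :=
    (ae_restrict_mem measurableSet_Ioi).mono fun t (ht : 0 < t) => by
      have : 0 < t + α + 1 := by linarith
      positivity
  rw [hI, hI, hI, Nat.add_sub_cancel]
  exact sub_nonneg.2 (sq_integral_mul_pow_odd_le hw hint m)

/-- Turán type inequality for the derivatives of `Γ(β+1) μ(x, β, α)` in `β`,
for odd `n ≥ 1`. -/
theorem volterraI_turan (x α β : ℝ) (hx : 0 < x) (hα : -1 < α) (hβ : -1 < β)
    (n : ℕ) (hn1 : 1 ≤ n) (hn : Odd n) :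
    0 ≤ volterraI x α (n - 1) β * volterraI x α (n + 1) β -
      volterraI x α n β ^ 2 :=
  volterraI_turan_general x α β hx hα hβ n hn
end
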